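/- arXiv:2310.03637 — 4 statements merged into one kernel-verified Lean document; each statement's English description precedes it below -/
import Mathlib

section
/- Let K be an infinite field, let P = K[x_1,…,x_n], and let I ⊆ P[x_0] be a homogeneous ideal whose projective zero locus Z_+(I) over the algebraic closure of K is nonempty and finite. Then I is in generic coordinates if and only if I^sat = (I^deh)^h, i.e., the saturation of I with respect to the maximal homogeneous ideal equals the homogenization of the dehomogenization of I. -/
open MvPolynomial
open Fin.NatCast

/-! ### Term orders, initial ideals and Gröbner bases -/

/-- Total degree of an exponent vector. -/
def expDeg {σ : Type*} (a : σ →₀ ℕ) : ℕ := a.sum fun _ e => e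

/-- Degree reverse lexicographic strict order on exponent vectors; `sig j i` reads
"`j` is strictly less significant than `i`".  `a` is DRL-smaller than `b` iff its total degree
is smaller, or the degrees agree and at the least significant variable where they differ the
exponent of `a` is larger. -/
def drlLT {σ : Type*} (sig : σ → σ → Prop) (a b : σ →₀ ℕ) : Prop :=
  expDeg a < expDeg b ∨
    (expDeg a = expDeg b ∧ ∃ i, b i < a i ∧ ∀ j, sig j i → a j = b j)

/-- Lexicographic strict order on exponent vectors; `sig i j` reads "`i` is strictly less
significant than `j`".  `a` is LEX-smaller than `b` iff at the most significant variable where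
they differ the exponent of `a` is smaller. -/
def lexLT {σ : Type*} (sig : σ → σ → Prop) (a b : σ →₀ ℕ) : Prop :=
  ∃ i, a i < b i ∧ ∀ j, sig i j → a j = b j

/-- Significance relation on `Fin N` for which the variable significance is strictly
decreasing in the index (`x_0 > x_1 > ⋯`):  `sigDes i j` iff `i` is less significant
than `j`, i.e. `j < i`. -/
def sigDes {N : ℕ} (i j : Fin N) : Prop := j < i

/-- Significance relation on `Fin (N+1)` for a homogenized polynomial ring: the homogenization
variable `x_0` (index `0`) is the least significant variable, and among the remaining variables
the significance is strictly decreasing in the index. -/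
def sigH {N : ℕ} (i j : Fin (N + 1)) : Prop := j ≠ 0 ∧ (i = 0 ∨ j < i)

/-- `a` is the leading monomial (exponent vector) of `f` w.r.t. the strict term order `lt`. -/
def IsLeadMono {σ K : Type*} [CommSemiring K] (lt : (σ →₀ ℕ) → (σ →₀ ℕ) → Prop)
    (f : MvPolynomial σ K) (a : σ →₀ ℕ) : Prop :=
  a ∈ f.support ∧ ∀ b ∈ f.support, b ≠ a → lt b a

/-- The initial ideal of `I` w.r.t. the strict term order `lt`: the ideal generated by the
leading monomials of the nonzero elements of `I`. -/
noncomputable def initialIdeal {σ K : Type*} [CommSemiring K]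
    (lt : (σ →₀ ℕ) → (σ →₀ ℕ) → Prop) (I : Ideal (MvPolynomial σ K)) :
    Ideal (MvPolynomial σ K) :=
  Ideal.span {mf | ∃ f ∈ I, f ≠ 0 ∧ ∃ a, IsLeadMono lt f a ∧ mf = monomial a (1 : K)}

/-- `G` is a Gröbner basis of `I` w.r.t. the strict term order `lt`: `G ⊆ I` and the leading
monomials of the elements of `G` generate the initial ideal of `I`. -/
def IsGroebner {σ K : Type*} [CommSemiring K] (lt : (σ →₀ ℕ) → (σ →₀ ℕ) → Prop)
    (G : Set (MvPolynomial σ K)) (I : Ideal (MvPolynomial σ K)) : Prop :=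
  G ⊆ (I : Set (MvPolynomial σ K)) ∧
    Ideal.span {mf | ∃ g ∈ G, g ≠ 0 ∧ ∃ a, IsLeadMono lt g a ∧ mf = monomial a (1 : K)}
      = initialIdeal lt I

/-! ### Saturation, projective zero loci, generic coordinates, homogenization -/

/-- The saturation `I : (x_0, …, x_n)^∞ = ⋃_k (I : (x_0, …, x_n)^k)` of an ideal of a
polynomial ring with respect to the maximal ideal generated by all the variables. -/
noncomputable def maxSat {K : Type*} [Field K] {σ : Type*}
    (I : Ideal (MvPolynomial σ K)) : Ideal (MvPolynomial σ K) :=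
  ⨆ k : ℕ, Submodule.colon I (((Ideal.span (Set.range (X : σ → MvPolynomial σ K))) ^ k :
    Ideal (MvPolynomial σ K)) : Set (MvPolynomial σ K))

/-- The projective zero locus of `I` over the algebraic closure of `K`. -/
noncomputable def projZerosBar {K : Type*} [Field K] {σ : Type*}
    (I : Ideal (MvPolynomial σ K)) :
    Set (Projectivization (AlgebraicClosure K) (σ → AlgebraicClosure K)) :=
  {x | ∀ f ∈ I, eval x.rep (map (algebraMap K (AlgebraicClosure K)) f) = 0}

/-- `I` is in generic coordinates (w.r.t. the homogenization variable `v0`): its projective zero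
locus over the algebraic closure is finite, and either it is empty or `X v0` is a nonzerodivisor
modulo the saturation `I^sat`. -/
def GenCoords {K : Type*} [Field K] {σ : Type*} (v0 : σ)
    (I : Ideal (MvPolynomial σ K)) : Prop :=
  (projZerosBar I).Finite ∧
    (projZerosBar I = ∅ ∨ ∀ f, X v0 * f ∈ maxSat I → f ∈ maxSat I)

/-- Homogenization of `f` with respect to a new variable `x_0` placed at index `0`; the original
variables are shifted along `Fin.succ`. -/
noncomputable def homogPoly {K : Type*} [CommSemiring K] {q : ℕ}
    (f : MvPolynomial (Fin q) K) : MvPolynomial (Fin (q + 1)) K :=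
  f.support.sum fun a =>
    monomial (Finsupp.single (0 : Fin (q + 1)) (f.totalDegree - expDeg a)
      + a.mapDomain Fin.succ) (f.coeff a)

/-- Dehomogenization: substitute `x_0 ↦ 1` and shift the remaining variables back. -/
noncomputable def dehomAlg {K : Type*} [Field K] (n : ℕ) :
    MvPolynomial (Fin (n + 1)) K →ₐ[K] MvPolynomial (Fin n) K :=
  aeval fun i => Fin.cases (1 : MvPolynomial (Fin n) K) (fun j => X j) i

/-- An ideal of a polynomial ring is homogeneous if it contains all homogeneous components of
its elements. -/
def IsHomogIdeal {σ K : Type*} [CommSemiring K] (I : Ideal (MvPolynomial σ K)) : Prop :=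
  ∀ f ∈ I, ∀ d : ℕ, MvPolynomial.homogeneousComponent d f ∈ I

/-- The highest degree homogeneous component `f^top` of a polynomial. -/
noncomputable def topComp {σ K : Type*} [CommSemiring K] (f : MvPolynomial σ K) :
    MvPolynomial σ K :=
  MvPolynomial.homogeneousComponent f.totalDegree f

/-! ### Keyed iterated polynomial systems -/

/-- The univariate keyed iterated polynomial system attached to the bivariate polynomials
`g_1, …, g_n` (with `n = m + 1`, indexed here by `k = 0, …, m`), the plaintext `p` and the
ciphertext `c`.  The ambient ring is `K[x_1, …, x_m, y]`, where `x_j` has variable index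
`j - 1` and `y` has variable index `m`; in the bivariate ring `K[x, y]`, `x` has index `0`
and `y` has index `1`.  Explicitly, `keyedF m g p c 0 = g 1 (p, y) - x 1`,
`keyedF m g p c k = g (k+1) (x k, y) - x (k+1)` for `1 ≤ k ≤ m - 1` and
`keyedF m g p c m = g (m+1) (x m, y) - c`. -/
noncomputable def keyedF {K : Type*} [Field K] (m : ℕ)
    (g : ℕ → MvPolynomial (Fin 2) K) (p c : K) (k : ℕ) :
    MvPolynomial (Fin (m + 1)) K :=
  aeval ![if k = 0 then C p else X (((k - 1 : ℕ)) : Fin (m + 1)),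
          X ((m : ℕ) : Fin (m + 1))] (g k)
    - (if k < m then X ((k : ℕ) : Fin (m + 1)) else C c)

/-- The chain `ĝ_1 = g_1(p, y)`, `ĝ_{k+1} = g_{k+1}(ĝ_k(y), y)` of univariate polynomials
(0-based indexing: `ghat g p k = ĝ_{k+1}`). -/
noncomputable def ghat {K : Type*} [Field K] (g : ℕ → MvPolynomial (Fin 2) K)
    (p : K) : ℕ → Polynomial K
  | 0 => aeval ![Polynomial.C p, Polynomial.X] (g 0)
  | (k + 1) => aeval ![ghat g p k, Polynomial.X] (g (k + 1))

/-- Embed a univariate polynomial into `K[x_1, …, x_m, y]` via the variable `y`. -/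
noncomputable def yPoly {K : Type*} [Field K] (m : ℕ) (q : Polynomial K) :
    MvPolynomial (Fin (m + 1)) K :=
  Polynomial.aeval (X ((m : ℕ) : Fin (m + 1))) q

/-- The (monic, up to a unit) greatest common divisor of two univariate polynomials over a
field. -/
noncomputable def polyGCD {K : Type*} [Field K] (f g : Polynomial K) : Polynomial K :=
  @EuclideanDomain.gcd _ _ (Classical.decEq _) f g

/-- The number of distinct roots of a univariate polynomial in the base field. -/
noncomputable def numRoots {K : Type*} [Field K] (f : Polynomial K) : ℕ :=
  letI := Classical.decEq K
  f.roots.toFinset.card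

/-! ### Feistel-2n/n keyed iterated polynomial systems -/

/-- The nonlinear ("left branch") polynomials of the keyed iterated polynomial system for
Feistel-`2n/n` (with `n = m + 1`, indexed here by `k = 0, …, m`).  The ambient ring is
`K[x_{L,1}, x_{R,1}, …, x_{L,m}, x_{R,m}, y]` where `x_{L,j}` has variable index `2(j-1)`,
`x_{R,j}` has variable index `2(j-1) + 1` and `y` has variable index `2m`. -/
noncomputable def fstL {K : Type*} [Field K] (m : ℕ) (g : ℕ → MvPolynomial (Fin 2) K)
    (pL pR cL : K) (k : ℕ) : MvPolynomial (Fin (2 * m + 1)) K :=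
  (if k = 0 then C pR else X (((2 * (k - 1) + 1 : ℕ)) : Fin (2 * m + 1)))
  + aeval ![if k = 0 then C pL else X (((2 * (k - 1) : ℕ)) : Fin (2 * m + 1)),
            X (((2 * m : ℕ)) : Fin (2 * m + 1))] (g k)
  - (if k < m then X (((2 * k : ℕ)) : Fin (2 * m + 1)) else C cL)

/-- The linear ("right branch") polynomials of the keyed iterated polynomial system for
Feistel-`2n/n` (same variable conventions as in `fstL`). -/
noncomputable def fstR {K : Type*} [Field K] (m : ℕ) (pL cR : K) (k : ℕ) :
    MvPolynomial (Fin (2 * m + 1)) K :=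
  (if k = 0 then C pL else X (((2 * (k - 1) : ℕ)) : Fin (2 * m + 1)))
  - (if k < m then X (((2 * k + 1 : ℕ)) : Fin (2 * m + 1)) else C cR)

/-- The downsized Feistel system `H = {f̃_1, …, f̃_n}` (with `n = m + 1`, indexed here by
`k = 0, …, m`), obtained by substituting the linear polynomials into the nonlinear ones.  The
ambient ring is `K[x_{R,2}, …, x_{R,m}, x_{L,m}, y]` where `x_{R,j}` has variable index
`j - 2`, `x_{L,m}` has variable index `m - 1` and `y` has variable index `m`. -/
noncomputable def hTil {K : Type*} [Field K] (m : ℕ) (g : ℕ → MvPolynomial (Fin 2) K)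
    (pL pR cL : K) (k : ℕ) : MvPolynomial (Fin (m + 1)) K :=
  (if k = 0 then C pR else if k = 1 then C pL else X (((k - 2 : ℕ)) : Fin (m + 1)))
  + aeval ![if k = 0 then C pL else X (((k - 1 : ℕ)) : Fin (m + 1)),
            X ((m : ℕ) : Fin (m + 1))] (g k)
  - (if k < m then X ((k : ℕ) : Fin (m + 1)) else C cL)

/-- The chain `ĥ_1 = p_R + g_1(p_L, y)`, `ĥ_2 = p_L + g_2(ĥ_1, y)`,
`ĥ_i = ĥ_{i-2} + g_i(ĥ_{i-1}, y)` of univariate polynomials (0-based indexing: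
`hHat g pL pR k = ĥ_{k+1}`). -/
noncomputable def hHat {K : Type*} [Field K] (g : ℕ → MvPolynomial (Fin 2) K)
    (pL pR : K) : ℕ → Polynomial K
  | 0 => Polynomial.C pR + aeval ![Polynomial.C pL, Polynomial.X] (g 0)
  | 1 => Polynomial.C pL + aeval ![hHat g pL pR 0, Polynomial.X] (g 1)
  | (k + 2) => hHat g pL pR k + aeval ![hHat g pL pR (k + 1), Polynomial.X] (g (k + 2))

/-! ### Two plain/ciphertext systems -/

/-- A univariate keyed iterated polynomial system placed inside the ring
`K[u_1, …, u_m, v_1, …, v_m, y]` (`u_j` has index `j - 1`, `v_j` has index `m + j - 1`, `y` has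
index `2m`), with the state variables offset by `off` (so `off = 0` uses the `u`-variables and
`off = m` the `v`-variables). -/
noncomputable def twoF {K : Type*} [Field K] (m : ℕ) (g : ℕ → MvPolynomial (Fin 2) K)
    (p c : K) (off : ℕ) (k : ℕ) : MvPolynomial (Fin (2 * m + 1)) K :=
  aeval ![if k = 0 then C p else X (((off + (k - 1) : ℕ)) : Fin (2 * m + 1)),
          X (((2 * m : ℕ)) : Fin (2 * m + 1))] (g k)
  - (if k < m then X (((off + k : ℕ)) : Fin (2 * m + 1)) else C c)

/-! ### Macaulay spaces, degree falls, last fall degree, satiety, degree of regularity -/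

/-- The row space `W_{F,d}` of the degree-`d` inhomogeneous Macaulay matrix of the system `F`:
all polynomials of the form `∑ gᵢ·fᵢ` with `deg (gᵢ·fᵢ) ≤ d` for every `i`. -/
def Wsp {σ K ι : Type*} [CommSemiring K] [Fintype ι]
    (F : ι → MvPolynomial σ K) (d : ℕ) : Set (MvPolynomial σ K) :=
  {f | ∃ g : ι → MvPolynomial σ K, f = ∑ i, g i * F i ∧ ∀ i, (g i * F i).totalDegree ≤ d}

/-- `d_f`: the least degree `d` with `f ∈ W_{F,d}`. -/
noncomputable def dfall {σ K ι : Type*} [CommSemiring K] [Fintype ι]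
    (F : ι → MvPolynomial σ K) (f : MvPolynomial σ K) : ℕ :=
  sInf {d : ℕ | f ∈ Wsp F d}

/-- The last fall degree `d_F ∈ ℕ ∪ {∞}`: the least `d` such that every `f` in the ideal
generated by `F` lies in `W_{F, max (d, deg f)}` (the value `∞` imposes no condition since
`W_{F,∞} = (F)`). -/
noncomputable def lastFall {σ K ι : Type*} [CommSemiring K] [Fintype ι]
    (F : ι → MvPolynomial σ K) : ℕ∞ :=
  sInf {d : ℕ∞ | ∀ e : ℕ, d = (e : ℕ∞) →
    ∀ f ∈ Ideal.span (Set.range F), f ∈ Wsp F (max e f.totalDegree)}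

/-- The satiety of a homogeneous ideal: the least `s` such that `I` and `I^sat` agree in all
degrees `l ≥ s`. -/
noncomputable def satiety {σ K : Type*} [Field K] (I : Ideal (MvPolynomial σ K)) : ℕ :=
  sInf {s : ℕ | ∀ l, s ≤ l → ∀ f : MvPolynomial σ K, f.IsHomogeneous l →
    (f ∈ I ↔ f ∈ maxSat I)}

/-- The degree of regularity `d_reg(F) ∈ ℕ ∪ {∞}` of a polynomial system: the least `d` such
that every homogeneous polynomial of degree `d` lies in the ideal generated by the highest
degree components `F^top`. -/
noncomputable def dregSys {σ K : Type*} [CommSemiring K] (F : Set (MvPolynomial σ K)) : ℕ∞ :=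
  sInf {e : ℕ∞ | ∃ d : ℕ, e = (d : ℕ∞) ∧ ∀ f : MvPolynomial σ K, f.IsHomogeneous d →
    f ∈ Ideal.span (topComp '' F)}

/-!
For a homogeneous ideal `I`, the ideal `(I^deh)^h` is the `x_0`-saturation `I : x_0^∞`.
Indeed, a form `F` of degree `D` is `x_0^(D - deg F^deh) · (F^deh)^h`, which gives `⊇`; and for
`f ∈ I` of degree `D`, the form `∑_d x_0^(D - d) f_d` lies in `I` and is a power of `x_0` times
`(f^deh)^h`, which gives `⊆`. Since `x_0^k ∈ (x_0, …, x_n)^k`, always `I^sat ⊆ I : x_0^∞`;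
the reverse inclusion holds iff `x_0` is a nonzerodivisor modulo `I^sat`, because `I : x_0^∞`
is itself `x_0`-saturated and contains `I`.
-/

theorem Finsupp.single_zero_add_mapDomain_succ {M : Type*} [AddCommMonoid M] {n : ℕ}
    (y : M) (s : Fin n →₀ M) : single 0 y + s.mapDomain Fin.succ = cons y s := by
  ext i
  cases i using Fin.cases <;>
    simp [Finsupp.mapDomain_apply (Fin.succ_injective n), Finsupp.mapDomain_of_notMem_range,
      Fin.succ_ne_zero]

theorem Finsupp.degree_cons {M : Type*} [AddCommMonoid M] {n : ℕ} (y : M) (s : Fin n →₀ M) :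
    (cons y s).degree = y + s.degree := by
  simp [degree_eq_sum, Fin.sum_univ_succ]

theorem Finsupp.degree_eq_add_degree_tail {M : Type*} [AddCommMonoid M] {n : ℕ}
    (s : Fin (n + 1) →₀ M) : s.degree = s 0 + s.tail.degree := by
  conv_lhs => rw [← cons_tail s]
  exact degree_cons _ _

theorem expDeg_eq_degree {σ : Type*} (a : σ →₀ ℕ) : expDeg a = a.degree := rfl

section Homogenization

variable {R : Type*} [CommSemiring R] {n : ℕ}

-- Intended for `p.totalDegree ≤ D`: a monomial of degree `> D` gets `x_0`-exponent `0`.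
noncomputable def homogenizeTo (D : ℕ) :
    MvPolynomial (Fin n) R →ₗ[R] MvPolynomial (Fin (n + 1)) R :=
  AddMonoidAlgebra.mapDomainLinearMap R R fun a => Finsupp.cons (D - a.degree) a

theorem homogenizeTo_monomial (D : ℕ) (a : Fin n →₀ ℕ) (c : R) :
    homogenizeTo D (monomial a c) = monomial (Finsupp.cons (D - a.degree) a) c := by
  simp [homogenizeTo, ← single_eq_monomial]

theorem homogenizeTo_apply (D : ℕ) (p : MvPolynomial (Fin n) R) :
    homogenizeTo D p =
      ∑ a ∈ p.support, monomial (Finsupp.cons (D - a.degree) a) (coeff a p) := by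
  conv_lhs => rw [← support_sum_monomial_coeff p]
  simp only [map_sum, homogenizeTo_monomial]

theorem homogPoly_eq_homogenizeTo (p : MvPolynomial (Fin n) R) :
    homogPoly p = homogenizeTo p.totalDegree p := by
  simp only [homogPoly, homogenizeTo_apply, expDeg_eq_degree,
    Finsupp.single_zero_add_mapDomain_succ]

theorem monomial_cons (k : ℕ) (a : Fin n →₀ ℕ) (c : R) :
    monomial (Finsupp.cons k a) c = X 0 ^ k * rename Fin.succ (monomial a c) := by
  rw [rename_monomial, X_pow_eq_monomial, monomial_mul, one_mul,
    Finsupp.single_zero_add_mapDomain_succ]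

theorem homogenizeTo_eq_X_pow_mul {D E : ℕ} {p : MvPolynomial (Fin n) R}
    (hp : p.totalDegree ≤ E) (hED : E ≤ D) :
    homogenizeTo D p = X 0 ^ (D - E) * homogenizeTo E p := by
  simp only [homogenizeTo_apply, Finset.mul_sum]
  refine Finset.sum_congr rfl fun a ha => ?_
  have ha : a.degree ≤ E := (le_totalDegree ha).trans hp
  rw [monomial_cons, monomial_cons, ← mul_assoc, ← pow_add]
  congr 2
  omega

theorem homogenizeTo_eq_X_pow_mul_homogPoly {D : ℕ} {p : MvPolynomial (Fin n) R}
    (hp : p.totalDegree ≤ D) :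
    homogenizeTo D p = X 0 ^ (D - p.totalDegree) * homogPoly p := by
  rw [homogPoly_eq_homogenizeTo, homogenizeTo_eq_X_pow_mul le_rfl hp]

end Homogenization

section Dehomogenization

variable {K : Type*} [Field K] {n : ℕ}

theorem dehomAlg_X_zero : dehomAlg n (X 0 : MvPolynomial (Fin (n + 1)) K) = 1 := by
  simp [dehomAlg]

theorem dehomAlg_rename_succ (p : MvPolynomial (Fin n) K) :
    dehomAlg n (rename Fin.succ p) = p := by
  rw [dehomAlg, aeval_rename]
  simp [Function.comp_def]

theorem dehomAlg_surjective : Function.Surjective (dehomAlg (K := K) n) :=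
  fun p => ⟨rename Fin.succ p, dehomAlg_rename_succ p⟩

theorem dehomAlg_monomial (a : Fin (n + 1) →₀ ℕ) (c : K) :
    dehomAlg n (monomial a c) = monomial (Finsupp.tail a) c := by
  conv_lhs => rw [← Finsupp.cons_tail a, monomial_cons]
  rw [map_mul, map_pow, dehomAlg_X_zero, one_pow, one_mul, dehomAlg_rename_succ]

theorem totalDegree_dehomAlg_le (F : MvPolynomial (Fin (n + 1)) K) :
    (dehomAlg n F).totalDegree ≤ F.totalDegree := by
  conv_lhs => rw [← support_sum_monomial_coeff F]
  rw [map_sum]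
  refine (totalDegree_finsetSum _ _).trans (Finset.sup_le fun a ha => ?_)
  rw [dehomAlg_monomial]
  have hdeg : a.degree ≤ F.totalDegree := le_totalDegree ha
  rw [Finsupp.degree_eq_add_degree_tail] at hdeg
  exact (totalDegree_monomial_le _ _).trans (show a.tail.degree ≤ _ by omega)

theorem homogenizeTo_dehomAlg {F : MvPolynomial (Fin (n + 1)) K} {D : ℕ}
    (hF : F.IsHomogeneous D) : homogenizeTo D (dehomAlg n F) = F := by
  conv_lhs => rw [← support_sum_monomial_coeff F]
  conv_rhs => rw [← support_sum_monomial_coeff F]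
  simp only [map_sum, dehomAlg_monomial, homogenizeTo_monomial]
  refine Finset.sum_congr rfl fun a ha => ?_
  have hdeg : a.degree = D := by
    rw [Finsupp.degree_eq_weight_one]
    exact hF (mem_support_iff.mp ha)
  rw [Finsupp.degree_eq_add_degree_tail] at hdeg
  rw [show D - (Finsupp.tail a).degree = a 0 by omega, Finsupp.cons_tail]

theorem MvPolynomial.IsHomogeneous.eq_X_pow_mul_homogPoly_dehomAlg
    {F : MvPolynomial (Fin (n + 1)) K} {D : ℕ} (hF : F.IsHomogeneous D) :
    F = X 0 ^ (D - (dehomAlg n F).totalDegree) * homogPoly (dehomAlg n F) := by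
  rw [← homogenizeTo_eq_X_pow_mul_homogPoly
    ((totalDegree_dehomAlg_le F).trans hF.totalDegree_le), homogenizeTo_dehomAlg hF]

end Dehomogenization

attribute [local instance] MvPolynomial.gradedAlgebra in
theorem MvPolynomial.IsHomogeneous.homogeneousComponent_mul {σ R : Type*} [CommSemiring R]
    {g : MvPolynomial σ R} {k : ℕ} (hg : g.IsHomogeneous k) (d : ℕ) (φ : MvPolynomial σ R) :
    homogeneousComponent (k + d) (g * φ) = g * homogeneousComponent d φ := by
  have hdec (ψ : MvPolynomial σ R) (i : ℕ) :
      (DirectSum.decompose (homogeneousSubmodule σ R) ψ i : MvPolynomial σ R) =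
        homogeneousComponent i ψ :=
    decomposition.decompose'_apply ψ i
  rw [← hdec, ← hdec]
  exact DirectSum.coe_decompose_mul_add_of_left_mem _ ((mem_homogeneousSubmodule k g).mpr hg)

namespace Ideal

variable {R : Type*} [CommSemiring R] {I J : Ideal R} {x f : R}

/-- The saturation `I : x^∞`. -/
def colonPowers (I : Ideal R) (x : R) : Ideal R where
  carrier := {f | ∃ k, x ^ k * f ∈ I}
  add_mem' := by
    rintro a b ⟨k, hk⟩ ⟨l, hl⟩
    refine ⟨k + l, ?_⟩
    convert I.add_mem (I.mul_mem_left (x ^ l) hk) (I.mul_mem_left (x ^ k) hl) using 1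
    ring
  zero_mem' := ⟨0, by simp⟩
  smul_mem' := by
    rintro c f ⟨k, hk⟩
    exact ⟨k, by simpa [smul_eq_mul, mul_left_comm] using I.mul_mem_left c hk⟩

theorem mem_colonPowers : f ∈ I.colonPowers x ↔ ∃ k, x ^ k * f ∈ I := Iff.rfl

theorem mem_colonPowers_of_mul_mem (h : x * f ∈ I.colonPowers x) : f ∈ I.colonPowers x := by
  obtain ⟨k, hk⟩ := h
  exact ⟨k + 1, by rwa [pow_succ, mul_assoc]⟩

theorem colonPowers_le (hIJ : I ≤ J) (hJ : ∀ f, x * f ∈ J → f ∈ J) :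
    I.colonPowers x ≤ J := by
  suffices ∀ k f, x ^ k * f ∈ I → f ∈ J from fun f ⟨k, hk⟩ => this k f hk
  intro k
  induction k with
  | zero => exact fun f hf => hIJ (by simpa using hf)
  | succ k ih => exact fun f hf => hJ f (ih _ (by rwa [← mul_assoc, ← pow_succ]))

end Ideal

theorem IsHomogIdeal.colonPowers {σ R : Type*} [CommSemiring R] {I : Ideal (MvPolynomial σ R)}
    (hI : IsHomogIdeal I) {g : MvPolynomial σ R} {k : ℕ} (hg : g.IsHomogeneous k) :
    IsHomogIdeal (I.colonPowers g) := by
  rintro f ⟨m, hm⟩ d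
  exact ⟨m, (hg.pow m).homogeneousComponent_mul d f ▸ hI _ hm _⟩

section Saturation

variable {K σ : Type*} [Field K]

theorem le_maxSat (I : Ideal (MvPolynomial σ K)) : I ≤ maxSat I := by
  refine le_trans (fun f hf => ?_) (le_iSup _ 0)
  exact Submodule.mem_colon.mpr fun p _ => by simpa [smul_eq_mul] using I.mul_mem_right p hf

theorem maxSat_le_colonPowers (I : Ideal (MvPolynomial σ K)) (i : σ) :
    maxSat I ≤ I.colonPowers (X i) := by
  refine iSup_le fun k f hf => Ideal.mem_colonPowers.mpr ⟨k, ?_⟩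
  have hXk : (X i : MvPolynomial σ K) ^ k ∈ Ideal.span (Set.range X) ^ k :=
    Ideal.pow_mem_pow (Ideal.subset_span (Set.mem_range_self i)) k
  simpa only [smul_eq_mul, mul_comm] using Submodule.mem_colon.mp hf _ hXk

end Saturation

section HomogenizationOfDehomogenization

variable {K : Type*} [Field K] {n : ℕ} {I : Ideal (MvPolynomial (Fin (n + 1)) K)}

theorem homogenizeTo_dehomAlg_mem (hI : IsHomogIdeal I) {f : MvPolynomial (Fin (n + 1)) K}
    (hf : f ∈ I) : homogenizeTo f.totalDegree (dehomAlg n f) ∈ I := by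
  have hsum : dehomAlg n f = ∑ d ∈ Finset.range (f.totalDegree + 1),
      dehomAlg n (homogeneousComponent d f) := by
    rw [← map_sum, sum_homogeneousComponent]
  rw [hsum, map_sum]
  refine Ideal.sum_mem _ fun d hd => ?_
  have hF := homogeneousComponent_isHomogeneous d f
  rw [homogenizeTo_eq_X_pow_mul ((totalDegree_dehomAlg_le _).trans hF.totalDegree_le)
    (Nat.lt_succ_iff.mp (Finset.mem_range.mp hd)), homogenizeTo_dehomAlg hF]
  exact I.mul_mem_left _ (hI f hf d)

theorem span_homogPoly_map_dehomAlg (hI : IsHomogIdeal I) :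
    Ideal.span (homogPoly '' (I.map (dehomAlg n) : Set (MvPolynomial (Fin n) K))) =
      I.colonPowers (X 0) := by
  apply le_antisymm
  · rw [Ideal.span_le]
    rintro _ ⟨p, hp, rfl⟩
    obtain ⟨f, hf, rfl⟩ := (Ideal.mem_map_iff_of_surjective _ dehomAlg_surjective).mp hp
    refine ⟨f.totalDegree - (dehomAlg n f).totalDegree, ?_⟩
    rw [← homogenizeTo_eq_X_pow_mul_homogPoly (totalDegree_dehomAlg_le f)]
    exact homogenizeTo_dehomAlg_mem hI hf
  · intro f hf
    rw [← sum_homogeneousComponent f]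
    refine Ideal.sum_mem _ fun d _ => ?_
    have hF := homogeneousComponent_isHomogeneous d f
    obtain ⟨k, hk⟩ := hI.colonPowers (isHomogeneous_X K 0) f hf d
    have hdeh : dehomAlg n (homogeneousComponent d f) ∈ I.map (dehomAlg n) := by
      simpa [dehomAlg_X_zero] using Ideal.mem_map_of_mem (dehomAlg n) hk
    rw [hF.eq_X_pow_mul_homogPoly_dehomAlg]
    exact Ideal.mul_mem_left _ _ (Ideal.subset_span ⟨_, hdeh, rfl⟩)

end HomogenizationOfDehomogenization

theorem stmt_1_general {K : Type*} [Field K] (n : ℕ)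
    (I : Ideal (MvPolynomial (Fin (n + 1)) K))
    (hhom : IsHomogIdeal I)
    (hne : (projZerosBar I).Nonempty)
    (hfin : (projZerosBar I).Finite) :
    GenCoords (0 : Fin (n + 1)) I ↔
      maxSat I = Ideal.span (homogPoly ''
        ((Ideal.map (dehomAlg (K := K) n) I : Ideal (MvPolynomial (Fin n) K)) :
          Set (MvPolynomial (Fin n) K))) := by
  rw [span_homogPoly_map_dehomAlg hhom]
  constructor
  · rintro ⟨-, hempty | hX0⟩
    · exact absurd hempty hne.ne_empty
    · exact le_antisymm (maxSat_le_colonPowers I 0) (Ideal.colonPowers_le (le_maxSat I) hX0)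
  · intro hsat
    refine ⟨hfin, Or.inr fun f hf => ?_⟩
    rw [hsat] at hf ⊢
    exact Ideal.mem_colonPowers_of_mul_mem hf

/-- For an infinite field `K` and a homogeneous ideal `I ⊆ K[x_0, …, x_n]`
whose projective zero locus over the algebraic closure is nonempty and finite, `I` is in
generic coordinates iff `I^sat = (I^deh)^h`. -/
theorem stmt_1 {K : Type*} [Field K] [Infinite K] (n : ℕ)
    (I : Ideal (MvPolynomial (Fin (n + 1)) K))
    (hhom : IsHomogIdeal I)
    (hne : (projZerosBar I).Nonempty)
    (hfin : (projZerosBar I).Finite) :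
    GenCoords (0 : Fin (n + 1)) I ↔
      maxSat I = Ideal.span (homogPoly ''
        ((Ideal.map (dehomAlg (K := K) n) I : Ideal (MvPolynomial (Fin n) K)) :
          Set (MvPolynomial (Fin n) K))) :=
  stmt_1_general n I hhom hne hfin
end

section
/- Let K be an algebraically closed field and let F = {f_1,…,f_m} ⊆ K[x_1,…,x_n] be a polynomial system such that (F) ≠ (1) and the ideal (F) is zero-dimensional. Then for every Gröbner basis G of the ideal (F) with respect to the degree reverse lexicographic order, the homogenized ideal (G^h), generated by the homogenizations of the elements of G, is in generic coordinates. -/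
open MvPolynomial
open Fin.NatCast

/-!
Embed `K[x_0, …, x_n]` into `K[x_1, …, x_n][t]` by `x_0 ↦ t`, `x_j ↦ x_j t`. Because DRL refines
the total degree, division by the Gröbner basis `G` yields standard representations
`f = ∑ qᵢ gᵢ` with `deg (qᵢ gᵢ) ≤ deg f`; in the Rees algebra this says that `h ∈ (G^h)` iff every
`t`-coefficient of the image of `h` lies in `I = (F)`. Multiplication by `x_0` only shifts these
coefficients, so `x_0` is a nonzerodivisor modulo `(G^h)`, and hence modulo its saturation.

In particular `f^h ∈ (G^h)` for all `f ∈ I`. Since `K[x]/I` is zero-dimensional it is finite over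
`K`, so `I` contains a monic polynomial in each single variable `x_i`; at a projective zero with
`x_0 = 0` its homogenization reduces to `x_i^d`, so every projective zero has `x_0 ≠ 0`. Such a zero
is a rescaled affine zero of `I`, and these are finite in number.
-/

namespace GroebnerHomogenization

lemma wellFounded_of_finite_predecessors {α : Type*} {r : α → α → Prop}
    (htrans : ∀ {a b c}, r a b → r b c → r a c) (hirrefl : ∀ a, ¬ r a a)
    (hfin : ∀ b, {a | r a b}.Finite) : WellFounded r := by
  refine Subrelation.wf (r := InvImage (· < ·) fun b => {a | r a b}.ncard) (fun {a b} hab => ?_)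
    (InvImage.wf _ wellFounded_lt)
  exact Set.ncard_lt_ncard ⟨fun _ hc => htrans hc hab, fun hsub => hirrefl a (hsub hab)⟩ (hfin b)

lemma expDeg_eq_degree {σ : Type*} (a : σ →₀ ℕ) : expDeg a = a.degree := rfl

section DRL

variable {N : ℕ} {a b : Fin N →₀ ℕ}

/-- DRL is the lexicographic order on the total degree followed by the negated exponents read
from the last variable backwards. -/
noncomputable def drlKey (a : Fin N →₀ ℕ) : ℕ ×ₗ Lex (Fin N → ℤ) :=
  toLex (a.degree, toLex fun k => -(a k.rev : ℤ))

lemma drlLT_iff_drlKey_lt : drlLT sigDes a b ↔ drlKey a < drlKey b := by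
  simp only [drlLT, sigDes, drlKey, expDeg_eq_degree, Prod.Lex.toLex_lt_toLex]
  refine or_congr Iff.rfl (and_congr Iff.rfl ?_)
  show _ ↔ ∃ k, (∀ j < k, _) ∧ _
  constructor
  · rintro ⟨i, hi, htail⟩
    refine ⟨i.rev, fun j hj => ?_, by simpa using hi⟩
    simp [htail j.rev (Fin.lt_rev_iff.mpr hj)]
  · rintro ⟨k, htail, hk⟩
    refine ⟨k.rev, by simpa using hk, fun j hj => ?_⟩
    simpa using htail j.rev (Fin.rev_lt_iff.mp hj)

lemma drlKey_injective : Function.Injective (drlKey (N := N)) := by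
  intro a b h
  ext i
  simpa [drlKey] using congrFun (congrArg (fun x => ofLex (ofLex x).2) h) i.rev

lemma drlKey_add (a b : Fin N →₀ ℕ) : drlKey (a + b) = drlKey a + drlKey b := by
  simp only [drlKey, map_add, Finsupp.coe_add, Pi.add_apply, Nat.cast_add, neg_add]
  rfl

lemma drlLT_add_left (s : Fin N →₀ ℕ) (h : drlLT sigDes a b) : drlLT sigDes (s + a) (s + b) := by
  rw [drlLT_iff_drlKey_lt] at h ⊢
  rw [drlKey_add, drlKey_add]
  exact add_lt_add_right h _

lemma degree_le_of_drlLT (h : drlLT sigDes a b) : a.degree ≤ b.degree := by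
  rcases h with h | ⟨h, -⟩ <;> exact h.le

lemma wellFounded_drlLT : WellFounded (drlLT sigDes : (Fin N →₀ ℕ) → (Fin N →₀ ℕ) → Prop) := by
  refine wellFounded_of_finite_predecessors (fun hab hbc => ?_) (fun a h => ?_) fun b => ?_
  · rw [drlLT_iff_drlKey_lt] at hab hbc ⊢
    exact hab.trans hbc
  · exact (drlLT_iff_drlKey_lt.mp h).false
  · exact (Finsupp.finite_of_degree_le b.degree).subset fun a => degree_le_of_drlLT

end DRL

section LeadingMonomial

lemma IsLeadMono.ne_zero {σ R : Type*} [CommSemiring R] {lt : (σ →₀ ℕ) → (σ →₀ ℕ) → Prop}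
    {f : MvPolynomial σ R} {a : σ →₀ ℕ} (h : IsLeadMono lt f a) : f ≠ 0 :=
  support_nonempty.mp ⟨a, h.1⟩

variable {R : Type*} [CommSemiring R] {n : ℕ} {f : MvPolynomial (Fin n) R} {a : Fin n →₀ ℕ}

lemma exists_isLeadMono (hf : f ≠ 0) : ∃ a, IsLeadMono (drlLT sigDes) f a := by
  obtain ⟨a, ha, hmax⟩ := f.support.exists_max_image drlKey (support_nonempty.mpr hf)
  exact ⟨a, ha, fun b hb hba =>
    drlLT_iff_drlKey_lt.mpr ((hmax b hb).lt_of_ne (drlKey_injective.ne hba))⟩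

lemma totalDegree_eq_degree_of_isLeadMono (h : IsLeadMono (drlLT sigDes) f a) :
    f.totalDegree = a.degree :=
  le_antisymm
    (Finset.sup_le fun b hb =>
      if hba : b = a then hba ▸ le_rfl else degree_le_of_drlLT (h.2 b hb hba))
    (le_totalDegree h.1)

variable [Nontrivial R] {G : Set (MvPolynomial (Fin n) R)} {I : Ideal (MvPolynomial (Fin n) R)}

lemma exists_isLeadMono_le_of_isGroebner (hGB : IsGroebner (drlLT sigDes) G I) (hf : f ∈ I)
    (ha : IsLeadMono (drlLT sigDes) f a) :
    ∃ g ∈ G, ∃ b, IsLeadMono (drlLT sigDes) g b ∧ b ≤ a := by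
  have hmem : monomial a (1 : R) ∈ initialIdeal (drlLT sigDes) I :=
    Ideal.subset_span ⟨f, hf, IsLeadMono.ne_zero ha, a, ha, rfl⟩
  have hgens : {mf | ∃ g ∈ G, g ≠ 0 ∧ ∃ b, IsLeadMono (drlLT sigDes) g b ∧ mf = monomial b (1 : R)}
      = (fun b => monomial b (1 : R)) '' {b | ∃ g ∈ G, IsLeadMono (drlLT sigDes) g b} := by
    ext mf
    constructor
    · rintro ⟨g, hg, -, b, hb, rfl⟩
      exact ⟨b, ⟨g, hg, hb⟩, rfl⟩
    · rintro ⟨b, ⟨g, hg, hb⟩, rfl⟩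
      exact ⟨g, hg, IsLeadMono.ne_zero hb, b, hb, rfl⟩
  rw [← hGB.2, hgens, mem_ideal_span_monomial_image] at hmem
  obtain ⟨b, ⟨g, hg, hb⟩, hba⟩ := hmem a (by simp)
  exact ⟨g, hg, b, hb, hba⟩

end LeadingMonomial

section Reduction

variable {K : Type*} [Field K] {n : ℕ} {G : Set (MvPolynomial (Fin n) K)}
  {I : Ideal (MvPolynomial (Fin n) K)} {f : MvPolynomial (Fin n) K} {a : Fin n →₀ ℕ}

lemma exists_mul_sub_lt_of_isGroebner (hGB : IsGroebner (drlLT sigDes) G I) (hf : f ∈ I)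
    (ha : IsLeadMono (drlLT sigDes) f a) :
    ∃ g ∈ G, ∃ q : MvPolynomial (Fin n) K, q.totalDegree + g.totalDegree ≤ f.totalDegree ∧
      ∀ z ∈ (f - q * g).support, drlLT sigDes z a := by
  obtain ⟨g, hg, b, hb, hba⟩ := exists_isLeadMono_le_of_isGroebner hGB hf ha
  have hgb : coeff b g ≠ 0 := mem_support_iff.mp hb.1
  refine ⟨g, hg, monomial (a - b) (coeff a f / coeff b g), ?_, fun z hz => ?_⟩
  · rw [totalDegree_eq_degree_of_isLeadMono ha, totalDegree_eq_degree_of_isLeadMono hb,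
      ← tsub_add_cancel_of_le hba, map_add, tsub_add_cancel_of_le hba]
    exact Nat.add_le_add_right (totalDegree_monomial_le _ _) _
  have hza : z ≠ a := by
    rintro rfl
    refine mem_support_iff.mp hz ?_
    rw [coeff_sub, coeff_monomial_mul', if_pos tsub_le_self, tsub_tsub_cancel_of_le hba,
      div_mul_cancel₀ _ hgb, sub_self]
  by_cases hzf : z ∈ f.support
  · exact ha.2 z hzf hza
  have hzqg : coeff z (monomial (a - b) (coeff a f / coeff b g) * g) ≠ 0 := by
    simpa [coeff_sub, notMem_support_iff.mp hzf] using mem_support_iff.mp hz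
  rw [coeff_monomial_mul'] at hzqg
  split_ifs at hzqg with hle
  · have hz' : a - b + (z - (a - b)) = z := add_tsub_cancel_of_le hle
    have ha' : a - b + b = a := tsub_add_cancel_of_le hba
    have hne : z - (a - b) ≠ b := fun h => hza (by rw [← hz', h, ha'])
    have := drlLT_add_left (a - b) (hb.2 _ (mem_support_iff.mpr (right_ne_zero_of_mul hzqg)) hne)
    rwa [hz', ha'] at this
  · exact absurd rfl hzqg

end Reduction

section Rees

variable {R : Type*} [CommSemiring R] {n : ℕ}

lemma single_zero_add_mapDomain_succ {M : Type*} [AddCommMonoid M] (y : M) (s : Fin n →₀ M) :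
    Finsupp.single 0 y + s.mapDomain Fin.succ = Finsupp.cons y s := by
  ext i
  induction i using Fin.cases with
  | zero => simp [Finsupp.mapDomain_of_notMem_range]
  | succ j => simp [Finsupp.mapDomain_apply (Fin.succ_injective n)]

lemma degree_cons (y : ℕ) (s : Fin n →₀ ℕ) : (Finsupp.cons y s).degree = y + s.degree := by
  simp [Finsupp.degree_eq_sum, Fin.sum_univ_succ]

/-- The embedding of `K[x_0, …, x_n]` into `K[x_1, …, x_n][t]` sending `x_0 ↦ t` and
`x_{j+1} ↦ x_{j+1} t`; its image is the Rees algebra `⊕_d K[x]_{≤ d} t^d` of the degree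
filtration, and a form of degree `d` goes to `t^d` times its dehomogenization. -/
noncomputable def toRees :
    MvPolynomial (Fin (n + 1)) R →ₐ[R] Polynomial (MvPolynomial (Fin n) R) :=
  aeval (Fin.cons Polynomial.X fun j => Polynomial.C (X j) * Polynomial.X)

lemma toRees_X_zero : toRees (X 0 : MvPolynomial (Fin (n + 1)) R) = Polynomial.X := by
  rw [toRees, aeval_X, Fin.cons_zero]

lemma toRees_monomial (b : Fin (n + 1) →₀ ℕ) (c : R) :
    toRees (monomial b c) = Polynomial.monomial b.degree (monomial b.tail c) := by
  rw [toRees, aeval_monomial, Finsupp.prod_fintype _ _ fun _ => pow_zero _, Fin.prod_univ_succ,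
    Finsupp.degree_eq_sum, Fin.sum_univ_succ, monomial_eq,
    Finsupp.prod_fintype _ _ fun _ => pow_zero _]
  simp only [Fin.cons_zero, Fin.cons_succ, mul_pow, Finset.prod_mul_distrib,
    Finset.prod_pow_eq_pow_sum, ← map_pow, ← map_prod, Finsupp.tail_apply]
  rw [← Polynomial.C_mul_X_pow_eq_monomial, Polynomial.algebraMap_apply,
    MvPolynomial.algebraMap_eq]
  simp only [map_mul, pow_add]
  ring

lemma toRees_monomial_cons {a : Fin n →₀ ℕ} {d : ℕ} (h : a.degree ≤ d) (c : R) :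
    toRees (monomial (Finsupp.cons (d - a.degree) a) c) = Polynomial.monomial d (monomial a c) := by
  rw [toRees_monomial, degree_cons, Nat.sub_add_cancel h, Finsupp.tail_cons]

lemma toRees_homogPoly (f : MvPolynomial (Fin n) R) :
    toRees (homogPoly f) = Polynomial.monomial f.totalDegree f := by
  simp only [homogPoly, expDeg_eq_degree, single_zero_add_mapDomain_succ, map_sum]
  rw [Finset.sum_congr rfl fun a ha => toRees_monomial_cons (le_totalDegree ha) _, ← map_sum,
    support_sum_monomial_coeff]

lemma monomial_mem_range_toRees {q : MvPolynomial (Fin n) R} {d : ℕ} (h : q.totalDegree ≤ d) :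
    Polynomial.monomial d q ∈ (toRees : MvPolynomial (Fin (n + 1)) R →ₐ[R] _).range := by
  rw [← support_sum_monomial_coeff q, map_sum]
  exact Subalgebra.sum_mem _ fun a ha =>
    ⟨_, toRees_monomial_cons ((le_totalDegree ha).trans h) _⟩

lemma eq_of_degree_eq_of_tail_eq {b b' : Fin (n + 1) →₀ ℕ} (hdeg : b'.degree = b.degree)
    (htail : b'.tail = b.tail) : b' = b := by
  rw [← Finsupp.cons_tail b', ← Finsupp.cons_tail b, degree_cons, degree_cons, htail] at hdeg
  rw [← Finsupp.cons_tail b', ← Finsupp.cons_tail b, htail, Nat.add_right_cancel hdeg]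

lemma coeff_coeff_toRees (h : MvPolynomial (Fin (n + 1)) R) (b : Fin (n + 1) →₀ ℕ) :
    ((toRees h).coeff b.degree).coeff b.tail = h.coeff b := by
  classical
  induction h using MvPolynomial.induction_on' with
  | monomial b' c =>
    rw [toRees_monomial, Polynomial.coeff_monomial, coeff_monomial]
    by_cases hb : b' = b
    · simp [hb]
    rw [if_neg hb]
    split_ifs with hdeg
    · rw [coeff_monomial, if_neg fun htail => hb (eq_of_degree_eq_of_tail_eq hdeg htail)]
    · rfl
  | add p q hp hq => simp [hp, hq]

lemma toRees_injective :
    Function.Injective (toRees : MvPolynomial (Fin (n + 1)) R →ₐ[R] _) := by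
  intro p q h
  ext b
  rw [← coeff_coeff_toRees, h, coeff_coeff_toRees]

lemma totalDegree_coeff_toRees_le (h : MvPolynomial (Fin (n + 1)) R) (d : ℕ) :
    ((toRees h).coeff d).totalDegree ≤ d := by
  induction h using MvPolynomial.induction_on' with
  | monomial b c =>
    rw [toRees_monomial, Polynomial.coeff_monomial]
    split_ifs with hd
    · refine (totalDegree_monomial_le _ _).trans ?_
      rw [← hd, ← Finsupp.cons_tail b, degree_cons, Finsupp.tail_cons]
      exact Nat.le_add_left _ _
    · simp
  | add p q hp hq =>
    rw [map_add, Polynomial.coeff_add]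
    exact (totalDegree_add _ _).trans (max_le hp hq)

end Rees

lemma monomial_mem_map_C {R : Type*} [CommSemiring R] {I : Ideal R} {r : R} (hr : r ∈ I) (d : ℕ) :
    Polynomial.monomial d r ∈ I.map Polynomial.C := by
  rw [← Polynomial.C_mul_X_pow_eq_monomial]
  exact Ideal.mul_mem_right _ _ (Ideal.mem_map_of_mem _ hr)

section Homogenization

variable {K : Type*} [Field K] {n : ℕ} {G : Set (MvPolynomial (Fin n) K)}
  {I : Ideal (MvPolynomial (Fin n) K)}

lemma exists_mem_span_homogPoly_toRees_eq (hGB : IsGroebner (drlLT sigDes) G I)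
    {f : MvPolynomial (Fin n) K} (hf : f ∈ I) {d : ℕ} (hd : f.totalDegree ≤ d) :
    ∃ h ∈ Ideal.span (homogPoly '' G), toRees h = Polynomial.monomial d f := by
  set J := Ideal.span (homogPoly '' G)
  obtain rfl | hf0 := eq_or_ne f 0
  · exact ⟨0, J.zero_mem, by simp⟩
  obtain ⟨a, ha⟩ := exists_isLeadMono hf0
  induction a using wellFounded_drlLT.induction generalizing f with
  | _ a ih =>
    obtain ⟨g, hg, q, hdeg, hlt⟩ := exists_mul_sub_lt_of_isGroebner hGB hf ha
    obtain ⟨h', hh'J, hh'⟩ : ∃ h' ∈ J, toRees h' = Polynomial.monomial d (f - q * g) := by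
      obtain hf' | hf' := eq_or_ne (f - q * g) 0
      · exact ⟨0, J.zero_mem, by simp [hf']⟩
      obtain ⟨a', ha'⟩ := exists_isLeadMono hf'
      refine ih a' (hlt a' ha'.1) (sub_mem hf (I.mul_mem_left q (hGB.1 hg))) ?_ hf' ha'
      rw [totalDegree_eq_degree_of_isLeadMono ha']
      exact (degree_le_of_drlLT (hlt a' ha'.1)).trans
        ((totalDegree_eq_degree_of_isLeadMono ha).symm.le.trans hd)
    obtain ⟨m, hm⟩ := (AlgHom.mem_range _).mp
      (monomial_mem_range_toRees (d := d - g.totalDegree) (q := q) (by omega))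
    have hgJ : homogPoly g ∈ J := Ideal.subset_span ⟨g, hg, rfl⟩
    refine ⟨h' + m * homogPoly g, J.add_mem hh'J (J.mul_mem_left m hgJ), ?_⟩
    rw [map_add, map_mul, hh', hm, toRees_homogPoly, Polynomial.monomial_mul_monomial,
      Nat.sub_add_cancel (by omega), ← map_add, sub_add_cancel]

lemma span_homogPoly_eq_comap_toRees (hGB : IsGroebner (drlLT sigDes) G I) :
    Ideal.span (homogPoly '' G) = (I.map Polynomial.C).comap toRees := by
  refine le_antisymm (Ideal.span_le.mpr ?_) fun h hh => ?_
  · rintro _ ⟨g, hg, rfl⟩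
    rw [SetLike.mem_coe, Ideal.mem_comap, toRees_homogPoly]
    exact monomial_mem_map_C (hGB.1 hg) _
  rw [Ideal.mem_comap, Ideal.mem_map_C_iff] at hh
  choose k hkJ hk using fun d =>
    exists_mem_span_homogPoly_toRees_eq hGB (hh d) (totalDegree_coeff_toRees_le h d)
  have : h = ∑ d ∈ Finset.range ((toRees h).natDegree + 1), k d := by
    apply toRees_injective
    rw [map_sum]
    simp_rw [hk]
    exact (toRees h).as_sum_range
  rw [this]
  exact Ideal.sum_mem _ fun d _ => hkJ d

lemma homogPoly_mem_span_homogPoly (hGB : IsGroebner (drlLT sigDes) G I)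
    {f : MvPolynomial (Fin n) K} (hf : f ∈ I) : homogPoly f ∈ Ideal.span (homogPoly '' G) := by
  rw [span_homogPoly_eq_comap_toRees hGB, Ideal.mem_comap, toRees_homogPoly]
  exact monomial_mem_map_C hf _

lemma mem_span_homogPoly_of_X_zero_mul_mem (hGB : IsGroebner (drlLT sigDes) G I)
    {h : MvPolynomial (Fin (n + 1)) K} (hh : X 0 * h ∈ Ideal.span (homogPoly '' G)) :
    h ∈ Ideal.span (homogPoly '' G) := by
  rw [span_homogPoly_eq_comap_toRees hGB, Ideal.mem_comap, Ideal.mem_map_C_iff] at hh ⊢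
  intro k
  simpa [toRees_X_zero, Polynomial.coeff_X_mul] using hh (k + 1)

end Homogenization

section Saturation

variable {K : Type*} [Field K] {σ : Type*} {J : Ideal (MvPolynomial σ K)}

lemma mem_maxSat_iff {f : MvPolynomial σ K} :
    f ∈ maxSat J ↔
      ∃ k : ℕ, f ∈ J.colon ((Ideal.span (Set.range (X : σ → MvPolynomial σ K)) ^ k : Ideal _) :
        Set (MvPolynomial σ K)) :=
  Submodule.mem_iSup_of_directed _ <| Monotone.directed_le fun _ _ hkl =>
    Submodule.colon_mono le_rfl (Ideal.pow_le_pow_right hkl)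

lemma mem_maxSat_of_mul_mem_maxSat {r : MvPolynomial σ K} (hr : ∀ f, r * f ∈ J → f ∈ J)
    {f : MvPolynomial σ K} (hf : r * f ∈ maxSat J) : f ∈ maxSat J := by
  obtain ⟨k, hk⟩ := mem_maxSat_iff.mp hf
  refine mem_maxSat_iff.mpr ⟨k, Submodule.mem_colon.mpr fun p hp => hr _ ?_⟩
  simpa only [smul_eq_mul, mul_assoc] using Submodule.mem_colon.mp hk p hp

end Saturation

section UnivariateElements

variable {R : Type*} [CommSemiring R] {σ : Type*} (p : Polynomial R) (i : σ)

lemma aeval_X_eq_sum :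
    Polynomial.aeval (X i : MvPolynomial σ R) p =
      ∑ k ∈ p.support, monomial (Finsupp.single i k) (p.coeff k) := by
  conv_lhs => rw [p.as_sum_support]
  simp [X_pow_eq_monomial, C_mul_monomial]

lemma exists_eq_single_of_mem_support_aeval_X {b : σ →₀ ℕ}
    (hb : b ∈ (Polynomial.aeval (X i : MvPolynomial σ R) p).support) :
    ∃ k ∈ p.support, b = Finsupp.single i k := by
  classical
  rw [aeval_X_eq_sum] at hb
  obtain ⟨k, hk, hbk⟩ := Finset.mem_biUnion.mp (support_sum hb)
  exact ⟨k, hk, Finset.mem_singleton.mp (support_monomial_subset hbk)⟩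

lemma coeff_single_aeval_X (k : ℕ) :
    coeff (Finsupp.single i k) (Polynomial.aeval (X i : MvPolynomial σ R) p) = p.coeff k := by
  classical
  rw [aeval_X_eq_sum, coeff_sum]
  simp only [coeff_monomial, (Finsupp.single_injective i).eq_iff, Finset.sum_ite_eq',
    Polynomial.mem_support_iff, ne_eq, ite_not]
  split_ifs with h
  · exact h.symm
  · rfl

lemma totalDegree_aeval_X {p : Polynomial R} (hp : p ≠ 0) :
    (Polynomial.aeval (X i : MvPolynomial σ R) p).totalDegree = p.natDegree := by
  refine le_antisymm (Finset.sup_le fun b hb => ?_) ?_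
  · obtain ⟨k, hk, rfl⟩ := exists_eq_single_of_mem_support_aeval_X p i hb
    exact (Finsupp.degree_single i k).le.trans (Polynomial.le_natDegree_of_mem_supp k hk)
  · have hmem : Finsupp.single i p.natDegree ∈
        (Polynomial.aeval (X i : MvPolynomial σ R) p).support := by
      rw [mem_support_iff, coeff_single_aeval_X]
      exact Polynomial.leadingCoeff_ne_zero.mpr hp
    simpa using le_totalDegree hmem

end UnivariateElements

section Evaluation

variable {R L : Type*} [CommSemiring R] [CommSemiring L] (φ : R →+* L) {n : ℕ}

lemma eval_map_homogPoly (v : Fin (n + 1) → L) (f : MvPolynomial (Fin n) R) :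
    eval v (map φ (homogPoly f)) = ∑ a ∈ f.support,
      φ (coeff a f) * (v 0 ^ (f.totalDegree - a.degree) * ∏ j, v j.succ ^ a j) := by
  simp only [homogPoly, expDeg_eq_degree, single_zero_add_mapDomain_succ, map_sum, map_monomial,
    eval_monomial, Finsupp.prod_fintype _ _ fun _ => pow_zero _, Fin.prod_univ_succ,
    Finsupp.cons_zero, Finsupp.cons_succ]

lemma eval_smul_cons_one_homogPoly (c : L) (u : Fin n → L) (f : MvPolynomial (Fin n) R) :
    eval (c • Fin.cons 1 u) (map φ (homogPoly f)) = c ^ f.totalDegree * eval u (map φ f) := by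
  rw [eval_map_homogPoly, eval_map, eval₂_eq', Finset.mul_sum]
  refine Finset.sum_congr rfl fun a ha => ?_
  simp only [Pi.smul_apply, Fin.cons_zero, Fin.cons_succ, smul_eq_mul, mul_one, mul_pow,
    Finset.prod_mul_distrib, Finset.prod_pow_eq_pow_sum, ← Finsupp.degree_eq_sum]
  obtain ⟨e, he⟩ : ∃ e, f.totalDegree = e + a.degree :=
    ⟨_, (Nat.sub_add_cancel (le_totalDegree ha)).symm⟩
  rw [he, Nat.add_sub_cancel, pow_add]
  ring

lemma eval_homogPoly_aeval_X_of_eq_zero [Nontrivial R] {p : Polynomial R} (hp : p.Monic)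
    (i : Fin n) {v : Fin (n + 1) → L} (hv : v 0 = 0) :
    eval v (map φ (homogPoly (Polynomial.aeval (X i : MvPolynomial (Fin n) R) p))) =
      v i.succ ^ p.natDegree := by
  rw [eval_map_homogPoly, totalDegree_aeval_X i hp.ne_zero,
    Finset.sum_eq_single (Finsupp.single i p.natDegree)]
  · simp [coeff_single_aeval_X, hp.coeff_natDegree, Finsupp.single_apply]
  · intro b hb hne
    obtain ⟨k, hk, rfl⟩ := exists_eq_single_of_mem_support_aeval_X p i hb
    have hlt : k < p.natDegree :=
      (Polynomial.le_natDegree_of_mem_supp k hk).lt_of_ne fun h => hne (by rw [h])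
    simp [hv, zero_pow (Nat.sub_ne_zero_of_lt hlt)]
  · intro h
    simp [coeff_single_aeval_X, hp.coeff_natDegree] at h

end Evaluation

section Zeros

variable {K : Type*} [Field K]

lemma exists_monic_aeval_X_mem {σ : Type*} [Finite σ] {I : Ideal (MvPolynomial σ K)}
    (hdim : ringKrullDim (MvPolynomial σ K ⧸ I) = 0) (i : σ) :
    ∃ p : Polynomial K, p.Monic ∧ Polynomial.aeval (X i : MvPolynomial σ K) p ∈ I := by
  have : Ring.KrullDimLE 0 (MvPolynomial σ K ⧸ I) := (Ring.krullDimLE_iff).mpr hdim.le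
  have := (Module.finite_iff_krullDimLE_zero K (MvPolynomial σ K ⧸ I)).mpr this
  obtain ⟨p, hp, hpX⟩ := Algebra.IsIntegral.isIntegral (R := K) (Ideal.Quotient.mk I (X i))
  refine ⟨p, hp, Ideal.Quotient.eq_zero_iff_mem.mp ?_⟩
  rw [← Ideal.Quotient.mkₐ_eq_mk K, ← Polynomial.aeval_algHom_apply]
  exact hpX

variable {L : Type*} [Field L] [Algebra K L]

lemma finite_setOf_forall_eval_map_eq_zero {σ : Type*} [Finite σ] {I : Ideal (MvPolynomial σ K)}
    (hdim : ringKrullDim (MvPolynomial σ K ⧸ I) = 0) :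
    {u : σ → L | ∀ f ∈ I, eval u (map (algebraMap K L) f) = 0}.Finite := by
  choose p hp hpI using exists_monic_aeval_X_mem hdim
  refine (Set.Finite.pi fun i => (p i).rootSet_finite L).subset fun u hu i _ => ?_
  have hi := hu _ (hpI i)
  rw [← eval₂_eq_eval_map, ← aeval_def, ← Polynomial.aeval_algHom_apply, aeval_X] at hi
  exact (Polynomial.mem_rootSet).mpr ⟨(hp i).ne_zero, hi⟩

lemma eq_zero_of_forall_eval_homogPoly_eq_zero {n : ℕ} {I : Ideal (MvPolynomial (Fin n) K)}
    (hdim : ringKrullDim (MvPolynomial (Fin n) K ⧸ I) = 0) {v : Fin (n + 1) → L}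
    (hv : ∀ f ∈ I, eval v (map (algebraMap K L) (homogPoly f)) = 0) (hv0 : v 0 = 0) : v = 0 := by
  funext j
  induction j using Fin.cases with
  | zero => exact hv0
  | succ i =>
    obtain ⟨p, hp, hpI⟩ := exists_monic_aeval_X_mem hdim i
    have hi := hv _ hpI
    rw [eval_homogPoly_aeval_X_of_eq_zero _ hp i hv0] at hi
    exact eq_zero_of_pow_eq_zero hi

end Zeros

lemma finite_projZerosBar_span_homogPoly {K : Type*} [Field K] {n : ℕ}
    {G : Set (MvPolynomial (Fin n) K)} {I : Ideal (MvPolynomial (Fin n) K)}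
    (hGB : IsGroebner (drlLT sigDes) G I) (hdim : ringKrullDim (MvPolynomial (Fin n) K ⧸ I) = 0) :
    (projZerosBar (Ideal.span (homogPoly '' G))).Finite := by
  set L := AlgebraicClosure K
  refine ((finite_setOf_forall_eval_map_eq_zero (L := L) hdim).image fun u =>
    Projectivization.mk L (Fin.cons 1 u : Fin (n + 1) → L)
      fun h => one_ne_zero (congrFun h 0)).subset fun x hx => ?_
  have hzero : ∀ f ∈ I, eval x.rep (map (algebraMap K L) (homogPoly f)) = 0 := fun f hf =>
    hx _ (homogPoly_mem_span_homogPoly hGB hf)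
  have h0 : x.rep 0 ≠ 0 := fun h =>
    x.rep_nonzero (eq_zero_of_forall_eval_homogPoly_eq_zero hdim hzero h)
  set u : Fin n → L := fun j => (x.rep 0)⁻¹ * x.rep j.succ
  have hrep : x.rep 0 • (Fin.cons 1 u : Fin (n + 1) → L) = x.rep := by
    funext j
    induction j using Fin.cases with
    | zero => simp
    | succ j => simp [u, mul_inv_cancel_left₀ h0]
  refine ⟨u, fun f hf => ?_, ?_⟩
  · have hf' := hzero f hf
    rw [← hrep, eval_smul_cons_one_homogPoly] at hf'
    exact (mul_eq_zero.mp hf').resolve_left (pow_ne_zero _ h0)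
  · conv_rhs => rw [← x.mk_rep]
    exact (Projectivization.mk_eq_mk_iff' _ _ _ _ _).mpr
      ⟨(x.rep 0)⁻¹, (inv_smul_eq_iff₀ h0).mpr hrep.symm⟩

end GroebnerHomogenization

open GroebnerHomogenization

theorem stmt_3_general {K : Type*} [Field K] {n m : ℕ}
    (F : Fin m → MvPolynomial (Fin n) K)
    (hdim : ringKrullDim (MvPolynomial (Fin n) K ⧸ Ideal.span (Set.range F)) = 0)
    (G : Finset (MvPolynomial (Fin n) K))
    (hGB : IsGroebner (drlLT sigDes) (↑G : Set (MvPolynomial (Fin n) K))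
      (Ideal.span (Set.range F))) :
    GenCoords (0 : Fin (n + 1))
      (Ideal.span (homogPoly '' (↑G : Set (MvPolynomial (Fin n) K)))) :=
  ⟨finite_projZerosBar_span_homogPoly hGB hdim,
    Or.inr fun _ => mem_maxSat_of_mul_mem_maxSat fun _ => mem_span_homogPoly_of_X_zero_mul_mem hGB⟩

/-- For an algebraically closed field `K` and a polynomial system `F` with
`(F) ≠ (1)` zero-dimensional, the homogenization of any DRL Gröbner basis of `(F)` generates
an ideal in generic coordinates. -/
theorem stmt_3 {K : Type*} [Field K] [IsAlgClosed K] {n m : ℕ}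
    (F : Fin m → MvPolynomial (Fin n) K)
    (hne : Ideal.span (Set.range F) ≠ ⊤)
    (hdim : ringKrullDim (MvPolynomial (Fin n) K ⧸ Ideal.span (Set.range F)) = 0)
    (G : Finset (MvPolynomial (Fin n) K))
    (hGB : IsGroebner (drlLT sigDes) (↑G : Set (MvPolynomial (Fin n) K))
      (Ideal.span (Set.range F))) :
    GenCoords (0 : Fin (n + 1))
      (Ideal.span (homogPoly '' (↑G : Set (MvPolynomial (Fin n) K)))) :=
  stmt_3_general F hdim G hGB
end

section
/- Let K be a field, let n ≥ 2, and let f_1,…,f_n ∈ K[x_1,…,x_{n−1},y] be a univariate keyed iterated polynomial system built from g_1,…,g_n ∈ K[x,y] and p, c ∈ K. Define ĝ_1 = g_1(p,y) ∈ K[y], ĝ_i = g_i(ĝ_{i−1}(y), y) ∈ K[y] for 2 ≤ i ≤ n−1, and ĝ_n = g_n(ĝ_{n−1}(y), y) − c ∈ K[y]. Then (f_1,…,f_n) = (x_1 − ĝ_1, …, x_{n−1} − ĝ_{n−1}, ĝ_n) as ideals, and {x_1 − ĝ_1, …, x_{n−1} − ĝ_{n−1}, ĝ_n} is a Gröbner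 basis of this ideal with respect to the lexicographic order x_1 > ⋯ > x_{n−1} > y. -/
open MvPolynomial
open Fin.NatCast

/-! Modulo the earlier generators `x_j - ĝ_j` one may replace `x_k` by `ĝ_k(y)` inside `g_{k+1}`,
so `f_k + (x_{k+1} - ĝ_{k+1})` lies in the ideal of the earlier `x_j - ĝ_j` (with `x_n := c`):
the two families differ by a unitriangular change of generators and span the same ideal.

For the Gröbner property, let `f ≠ 0` lie in the ideal. If its LEX-leading monomial involves
some `x_j`, it is divisible by `x_j`, the leading monomial of `x_j - ĝ_j`. Otherwise it is a power
of `y`, the least significant variable, so every monomial of `f` is a power of `y` and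
`f ∈ K[y]`. The substitution `x_k ↦ ĝ_k` fixes `K[y]` and maps the ideal into `(ĝ_n)`, hence
`ĝ_n ∣ f` and the leading monomial of `f` is divisible by `y ^ deg ĝ_n`. -/

section Groebner

variable {σ K : Type*} [CommSemiring K] {lt : (σ →₀ ℕ) → (σ →₀ ℕ) → Prop}

theorem IsLeadMono.unique (hlt : ∀ a b, lt a b → ¬ lt b a) {f : MvPolynomial σ K}
    {a b : σ →₀ ℕ} (ha : IsLeadMono lt f a) (hb : IsLeadMono lt f b) : a = b := by
  by_contra h
  exact hlt a b (hb.2 a ha.1 h) (ha.2 b hb.1 (Ne.symm h))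

theorem IsLeadMono.ne_zero {f : MvPolynomial σ K} {a : σ →₀ ℕ} (ha : IsLeadMono lt f a) :
    f ≠ 0 := by
  rintro rfl
  exact notMem_support_iff.2 (coeff_zero a) ha.1

theorem isGroebner_of_forall_exists_le {G : Set (MvPolynomial σ K)}
    {I : Ideal (MvPolynomial σ K)} (hGI : G ⊆ I)
    (hG : ∀ f ∈ I, f ≠ 0 → ∀ a, IsLeadMono lt f a →
      ∃ g ∈ G, g ≠ 0 ∧ ∃ b, IsLeadMono lt g b ∧ b ≤ a) :
    IsGroebner lt G I := by
  refine ⟨hGI, le_antisymm (Ideal.span_mono ?_) (Ideal.span_le.2 ?_)⟩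
  · rintro _ ⟨g, hg, hg0, b, hb, rfl⟩
    exact ⟨g, hGI hg, hg0, b, hb, rfl⟩
  · rintro _ ⟨f, hf, hf0, a, ha, rfl⟩
    obtain ⟨g, hg, hg0, b, hb, hba⟩ := hG f hf hf0 a ha
    have hsplit : monomial a (1 : K) = monomial b 1 * monomial (a - b) 1 := by
      rw [monomial_mul, one_mul, add_tsub_cancel_of_le hba]
    rw [SetLike.mem_coe, hsplit]
    exact Ideal.mul_mem_right _ _ (Ideal.subset_span ⟨g, hg, hg0, b, hb, rfl⟩)

end Groebner

theorem Ideal.span_image_Iic_eq_of_unitriangular {R : Type*} [CommRing R] {F H : ℕ → R}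
    {m : ℕ} (h : ∀ k ≤ m, ∃ u : Rˣ, F k - u * H k ∈ Ideal.span (H '' Set.Iio k)) :
    Ideal.span (F '' Set.Iic m) = Ideal.span (H '' Set.Iic m) := by
  have hIio : ∀ {k}, k ≤ m → Set.Iio k ⊆ Set.Iic m := fun hk _ hj =>
    (Set.mem_Iio.1 hj).le.trans hk
  apply le_antisymm
  · rw [Ideal.span_le]
    rintro _ ⟨k, hk, rfl⟩
    obtain ⟨u, hu⟩ := h k hk
    rw [← sub_add_cancel (F k) (u * H k)]
    exact add_mem (Ideal.span_mono (Set.image_mono (hIio hk)) hu)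
      (Ideal.mul_mem_left _ _ (Ideal.subset_span ⟨k, hk, rfl⟩))
  · rw [Ideal.span_le]
    rintro _ ⟨k, hk, rfl⟩
    induction k using Nat.strong_induction_on with
    | _ k ih =>
      obtain ⟨u, hu⟩ := h k hk
      have hlower : Ideal.span (H '' Set.Iio k) ≤ Ideal.span (F '' Set.Iic m) :=
        Ideal.span_le.2 fun _ ⟨j, hj, hHj⟩ => hHj ▸ ih j hj (hIio hk hj)
      have hHk : H k = ↑u⁻¹ * (F k - (F k - u * H k)) := by
        rw [sub_sub_cancel, Units.inv_mul_cancel_left]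
      rw [hHk]
      exact Ideal.mul_mem_left _ _
        (sub_mem (Ideal.subset_span ⟨k, hk, rfl⟩) (hlower hu))

section Lex

variable {N : ℕ}

theorem lexLT_sigDes_asymm {a b : Fin N →₀ ℕ} (hab : lexLT sigDes a b) :
    ¬ lexLT sigDes b a := by
  rintro ⟨i', hi', hbi'⟩
  obtain ⟨i, hi, hai⟩ := hab
  rcases lt_trichotomy i i' with h | rfl | h
  · exact hi.ne (hbi' i h).symm
  · exact lt_asymm hi hi'
  · exact hi'.ne (hai i' h).symm

theorem lexLT_sigDes_single_last_iff {a : Fin (N + 1) →₀ ℕ} {e : ℕ} :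
    lexLT sigDes a (Finsupp.single (Fin.last N) e) ↔
      a = Finsupp.single (Fin.last N) (a (Fin.last N)) ∧ a (Fin.last N) < e := by
  constructor
  · rintro ⟨i, hi, hlower⟩
    obtain rfl : i = Fin.last N := by
      by_contra hne
      rw [Finsupp.single_eq_of_ne hne] at hi
      exact Nat.not_lt_zero _ hi
    refine ⟨Finsupp.ext fun j => ?_, by simpa using hi⟩
    rcases eq_or_ne j (Fin.last N) with rfl | hj
    · simp
    · rw [hlower j (Fin.lt_last_iff_ne_last.2 hj), Finsupp.single_eq_of_ne hj,
        Finsupp.single_eq_of_ne hj]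
  · rintro ⟨ha, he⟩
    refine ⟨Fin.last N, by simpa using he, fun j hj => ?_⟩
    rw [ha, Finsupp.single_eq_of_ne hj.ne, Finsupp.single_eq_of_ne hj.ne]

theorem lexLT_sigDes_single_last_single {j : Fin (N + 1)} (hj : j ≠ Fin.last N) (e : ℕ) :
    lexLT sigDes (Finsupp.single (Fin.last N) e) (Finsupp.single j 1) := by
  refine ⟨j, by simp [Finsupp.single_eq_of_ne hj], fun i hi => ?_⟩
  have hi' : i ≠ Fin.last N := (hi.trans_le (Fin.le_last j)).ne
  rw [Finsupp.single_eq_of_ne hi', Finsupp.single_eq_of_ne hi.ne]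

end Lex

section Univariate

variable {σ K : Type*}

theorem aeval_X_eq_sum_monomial [CommSemiring K] (i : σ) (q : Polynomial K) :
    Polynomial.aeval (X i : MvPolynomial σ K) q
      = ∑ e ∈ q.support, monomial (Finsupp.single i e) (q.coeff e) := by
  conv_lhs => rw [q.as_sum_support]
  simp only [map_sum, Polynomial.aeval_monomial, algebraMap_eq, C_mul_X_pow_eq_monomial]

theorem coeff_single_aeval_X [CommSemiring K] (i : σ) (q : Polynomial K) (e : ℕ) :
    coeff (Finsupp.single i e) (Polynomial.aeval (X i : MvPolynomial σ K) q) = q.coeff e := by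
  classical
  simp only [aeval_X_eq_sum_monomial, coeff_sum, coeff_monomial,
    (Finsupp.single_injective i).eq_iff, Finset.sum_ite_eq', Polynomial.mem_support_iff]
  split_ifs with h
  · rfl
  · exact (not_not.1 h).symm

theorem eq_single_of_mem_support_aeval_X [CommSemiring K] {i : σ} {q : Polynomial K}
    {b : σ →₀ ℕ} (hb : b ∈ (Polynomial.aeval (X i : MvPolynomial σ K) q).support) :
    b = Finsupp.single i (b i) := by
  classical
  rw [aeval_X_eq_sum_monomial] at hb
  obtain ⟨e, -, hb⟩ := Finset.mem_biUnion.1 (support_sum hb)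
  obtain rfl := Finset.mem_singleton.1 (support_monomial_subset hb)
  simp

theorem exists_aeval_X_eq_of_support [CommSemiring K] {i : σ} {f : MvPolynomial σ K}
    (hf : ∀ b ∈ f.support, b = Finsupp.single i (b i)) :
    ∃ q : Polynomial K, Polynomial.aeval (X i) q = f := by
  refine ⟨∑ b ∈ f.support, Polynomial.monomial (b i) (coeff b f), ?_⟩
  conv_rhs => rw [← support_sum_monomial_coeff f]
  rw [map_sum]
  refine Finset.sum_congr rfl fun b hb => ?_
  rw [Polynomial.aeval_monomial, algebraMap_eq, C_mul_X_pow_eq_monomial, ← hf b hb]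

end Univariate

section LexUnivariate

variable {K : Type*} {N : ℕ}

theorem isLeadMono_aeval_X_last [CommSemiring K] {q : Polynomial K} (hq : q ≠ 0) :
    IsLeadMono (lexLT sigDes) (Polynomial.aeval (X (Fin.last N) : MvPolynomial _ K) q)
      (Finsupp.single (Fin.last N) q.natDegree) := by
  refine ⟨?_, fun b hb hne => ?_⟩
  · rw [mem_support_iff, coeff_single_aeval_X]
    exact Polynomial.leadingCoeff_ne_zero.2 hq
  · have hb' := eq_single_of_mem_support_aeval_X hb
    rw [mem_support_iff, hb', coeff_single_aeval_X] at hb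
    refine lexLT_sigDes_single_last_iff.2 ⟨hb', ?_⟩
    refine (Polynomial.le_natDegree_of_ne_zero hb).lt_of_ne fun h => hne ?_
    rw [hb', h]

theorem isLeadMono_X_sub_aeval_X_last [CommRing K] [Nontrivial K] {j : Fin (N + 1)}
    (hj : j ≠ Fin.last N) (q : Polynomial K) :
    IsLeadMono (lexLT sigDes) (X j - Polynomial.aeval (X (Fin.last N) : MvPolynomial _ K) q)
      (Finsupp.single j 1) := by
  have hnot : Finsupp.single j 1 ∉
      (Polynomial.aeval (X (Fin.last N) : MvPolynomial _ K) q).support := fun h => by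
    simpa [Finsupp.single_eq_of_ne hj] using
      DFunLike.congr_fun (eq_single_of_mem_support_aeval_X h) j
  refine ⟨?_, fun b hb hne => ?_⟩
  · rw [mem_support_iff, coeff_sub, notMem_support_iff.1 hnot, sub_zero, coeff_X, if_pos rfl]
    exact one_ne_zero (α := K)
  · rcases Finset.mem_union.1 (support_sub _ _ _ hb) with h | h
    · rw [support_X, Finset.mem_singleton] at h
      exact absurd h hne
    · rw [eq_single_of_mem_support_aeval_X h]
      exact lexLT_sigDes_single_last_single hj _

theorem IsLeadMono.eq_single_last_of_mem_support [CommSemiring K]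
    {f : MvPolynomial (Fin (N + 1)) K} {e : ℕ}
    (hf : IsLeadMono (lexLT sigDes) f (Finsupp.single (Fin.last N) e))
    {b : Fin (N + 1) →₀ ℕ} (hb : b ∈ f.support) :
    b = Finsupp.single (Fin.last N) (b (Fin.last N)) := by
  by_cases h : b = Finsupp.single (Fin.last N) e
  · simp [h]
  · exact (lexLT_sigDes_single_last_iff.1 (hf.2 b hb h)).1

end LexUnivariate

theorem MvPolynomial.aeval_sub_aeval_mem {σ K R : Type*} [CommSemiring K] [CommRing R]
    [Algebra K R] {I : Ideal R} {x y : σ → R} (hxy : ∀ i, x i - y i ∈ I)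
    (h : MvPolynomial σ K) : aeval x h - aeval y h ∈ I := by
  rw [← Ideal.Quotient.eq, ← Ideal.Quotient.mkₐ_eq_mk K, ← AlgHom.comp_apply,
    ← AlgHom.comp_apply, comp_aeval, comp_aeval]
  congr 2
  funext i
  exact Ideal.Quotient.eq.2 (hxy i)

namespace KeyedSystem

variable {K : Type*} [Field K] (m : ℕ) (g : ℕ → MvPolynomial (Fin 2) K) (p c : K)

noncomputable def triangularBasis (k : ℕ) : MvPolynomial (Fin (m + 1)) K :=
  if k < m then X ((k : ℕ) : Fin (m + 1)) - yPoly m (ghat g p k)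
  else yPoly m (ghat g p m - Polynomial.C c)

/-- `x_{k+1} - ĝ_{k+1}` (0-based, as in `ghat`), where `x_n` is read as the ciphertext `c`. -/
noncomputable def residual (k : ℕ) : MvPolynomial (Fin (m + 1)) K :=
  (if k < m then X ((k : ℕ) : Fin (m + 1)) else C c) - yPoly m (ghat g p k)

variable {m g p c}

theorem yPoly_aeval_pair (h : MvPolynomial (Fin 2) K) (q : Polynomial K) :
    yPoly m (aeval ![q, Polynomial.X] h) = aeval ![yPoly m q, X ((m : ℕ) : Fin (m + 1))] h := by
  rw [yPoly, ← AlgHom.comp_apply, comp_aeval]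
  congr 2
  funext i
  fin_cases i <;> simp [yPoly]

theorem keyedF_add_residual_mem {k : ℕ} (hk : k ≤ m) :
    keyedF m g p c k + residual m g p c k ∈ Ideal.span (residual m g p c '' Set.Iio k) := by
  cases k with
  | zero =>
    have hghat : yPoly m (ghat g p 0) = aeval ![C p, X ((m : ℕ) : Fin (m + 1))] (g 0) := by
      rw [ghat, yPoly_aeval_pair]
      simp [yPoly]
    simp [keyedF, residual, hghat]
  | succ k =>
    have hkm : k < m := hk
    have hkey : keyedF m g p c (k + 1) + residual m g p c (k + 1)
        = aeval ![X ((k : ℕ) : Fin (m + 1)), X ((m : ℕ) : Fin (m + 1))] (g (k + 1))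
          - aeval ![yPoly m (ghat g p k), X ((m : ℕ) : Fin (m + 1))] (g (k + 1)) := by
      rw [keyedF, residual, ghat, yPoly_aeval_pair]
      simp only [Nat.add_one_ne_zero, if_false, Nat.add_sub_cancel]
      ring
    rw [hkey]
    refine aeval_sub_aeval_mem (fun i => ?_) _
    fin_cases i
    · have hk' : residual m g p c k ∈ residual m g p c '' Set.Iio (k + 1) :=
        ⟨k, k.lt_succ_self, rfl⟩
      simpa [residual, hkm] using Ideal.subset_span hk'
    · simp

theorem triangularBasis_eq_residual_or_neg {k : ℕ} (hk : k ≤ m) :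
    triangularBasis m g p c k = residual m g p c k ∨
      triangularBasis m g p c k = -residual m g p c k := by
  rcases hk.lt_or_eq with hk | rfl
  · left
    simp [triangularBasis, residual, hk]
  · right
    simp [triangularBasis, residual, yPoly]

theorem span_keyedF_eq_span_triangularBasis :
    Ideal.span (keyedF m g p c '' Set.Iic m)
      = Ideal.span (triangularBasis m g p c '' Set.Iic m) := by
  have hkeyed : Ideal.span (keyedF m g p c '' Set.Iic m)
      = Ideal.span (residual m g p c '' Set.Iic m) :=
    Ideal.span_image_Iic_eq_of_unitriangular fun k hk =>
      ⟨-1, by simpa using keyedF_add_residual_mem hk⟩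
  have htriangular : Ideal.span (triangularBasis m g p c '' Set.Iic m)
      = Ideal.span (residual m g p c '' Set.Iic m) := by
    refine Ideal.span_image_Iic_eq_of_unitriangular fun k hk => ?_
    rcases triangularBasis_eq_residual_or_neg (g := g) (p := p) (c := c) hk with h | h
    · exact ⟨1, by simp [h]⟩
    · exact ⟨-1, by simp [h]⟩
  rw [hkeyed, htriangular]

theorem yPoly_eq_aeval_X_last (q : Polynomial K) :
    yPoly m q = Polynomial.aeval (X (Fin.last m)) q := by
  rw [yPoly, Fin.natCast_eq_last]

variable (m g p) in
noncomputable def evalGhat : MvPolynomial (Fin (m + 1)) K →ₐ[K] Polynomial K :=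
  aeval fun i => if (i : ℕ) < m then ghat g p i else Polynomial.X

theorem evalGhat_yPoly (q : Polynomial K) : evalGhat m g p (yPoly m q) = q := by
  rw [yPoly_eq_aeval_X_last, ← Polynomial.aeval_algHom_apply, evalGhat, aeval_X]
  simp

theorem map_evalGhat_span_le :
    (Ideal.span (triangularBasis m g p c '' Set.Iic m)).map (evalGhat m g p)
      ≤ Ideal.span {ghat g p m - Polynomial.C c} := by
  rw [Ideal.map_span, Ideal.span_le]
  rintro _ ⟨_, ⟨k, hk, rfl⟩, rfl⟩
  rcases (Set.mem_Iic.1 hk).lt_or_eq with hk | rfl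
  · have hkv : (((k : ℕ) : Fin (m + 1)) : ℕ) = k := Fin.val_cast_of_lt (by omega)
    simp only [triangularBasis, hk, if_true, map_sub, evalGhat_yPoly]
    simp [evalGhat, hkv, hk]
  · rw [triangularBasis, if_neg (lt_irrefl _), evalGhat_yPoly]
    exact Ideal.mem_span_singleton_self _

theorem isLeadMono_triangularBasis_of_ne_last {j : Fin (m + 1)} (hj : j ≠ Fin.last m) :
    IsLeadMono (lexLT sigDes) (triangularBasis m g p c j) (Finsupp.single j 1) := by
  rw [triangularBasis, if_pos (Fin.val_lt_last hj), Fin.cast_val_eq_self, yPoly_eq_aeval_X_last]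
  exact isLeadMono_X_sub_aeval_X_last hj _

theorem isLeadMono_triangularBasis_self (h : ghat g p m - Polynomial.C c ≠ 0) :
    IsLeadMono (lexLT sigDes) (triangularBasis m g p c m)
      (Finsupp.single (Fin.last m) (ghat g p m - Polynomial.C c).natDegree) := by
  rw [triangularBasis, if_neg (lt_irrefl m), yPoly_eq_aeval_X_last]
  exact isLeadMono_aeval_X_last h

theorem exists_isLeadMono_le_of_ne_last {a : Fin (m + 1) →₀ ℕ} {j : Fin (m + 1)}
    (hj : j ≠ Fin.last m) (haj : a j ≠ 0) :
    ∃ g' ∈ triangularBasis m g p c '' Set.Iic m, g' ≠ 0 ∧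
      ∃ b, IsLeadMono (lexLT sigDes) g' b ∧ b ≤ a := by
  have hlm := isLeadMono_triangularBasis_of_ne_last (g := g) (p := p) (c := c) hj
  exact ⟨_, ⟨j, Set.mem_Iic.2 (Fin.val_lt_last hj).le, rfl⟩, hlm.ne_zero, _, hlm,
    Finsupp.single_le_iff.2 (Nat.one_le_iff_ne_zero.2 haj)⟩

theorem exists_isLeadMono_le_of_single_last {f : MvPolynomial (Fin (m + 1)) K} {e : ℕ}
    (hf : f ∈ Ideal.span (triangularBasis m g p c '' Set.Iic m))
    (ha : IsLeadMono (lexLT sigDes) f (Finsupp.single (Fin.last m) e)) :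
    ∃ g' ∈ triangularBasis m g p c '' Set.Iic m, g' ≠ 0 ∧
      ∃ b, IsLeadMono (lexLT sigDes) g' b ∧ b ≤ Finsupp.single (Fin.last m) e := by
  obtain ⟨Q, rfl⟩ :=
    exists_aeval_X_eq_of_support fun b hb => ha.eq_single_last_of_mem_support hb
  have hQ : (ghat g p m - Polynomial.C c) ∣ Q := by
    have := map_evalGhat_span_le (Ideal.mem_map_of_mem (evalGhat m g p) hf)
    rwa [← yPoly_eq_aeval_X_last, evalGhat_yPoly, Ideal.mem_span_singleton] at this
  have hQ0 : Q ≠ 0 := by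
    rintro rfl
    exact ha.ne_zero (map_zero _)
  have hgn0 : ghat g p m - Polynomial.C c ≠ 0 := by
    rintro h
    exact hQ0 (zero_dvd_iff.1 (h ▸ hQ))
  obtain rfl : e = Q.natDegree := Finsupp.single_injective _ <|
    IsLeadMono.unique (fun _ _ => lexLT_sigDes_asymm) ha (isLeadMono_aeval_X_last hQ0)
  have hlm := isLeadMono_triangularBasis_self hgn0
  exact ⟨_, ⟨m, Set.mem_Iic.2 le_rfl, rfl⟩, hlm.ne_zero, _, hlm,
    Finsupp.single_le_single.2 (Polynomial.natDegree_le_of_dvd hQ hQ0)⟩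

theorem isGroebner_triangularBasis :
    IsGroebner (lexLT sigDes) (triangularBasis m g p c '' Set.Iic m)
      (Ideal.span (triangularBasis m g p c '' Set.Iic m)) := by
  refine isGroebner_of_forall_exists_le Ideal.subset_span fun f hf _ a ha => ?_
  by_cases hx : ∃ j ≠ Fin.last m, a j ≠ 0
  · obtain ⟨j, hj, haj⟩ := hx
    exact exists_isLeadMono_le_of_ne_last hj haj
  · push Not at hx
    have ha' : a = Finsupp.single (Fin.last m) (a (Fin.last m)) := by
      ext j
      rcases eq_or_ne j (Fin.last m) with rfl | hj
      · simp
      · simp [hx j hj, Finsupp.single_eq_of_ne hj]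
    rw [ha'] at ha ⊢
    exact exists_isLeadMono_le_of_single_last hf ha

end KeyedSystem

theorem stmt_6_general {K : Type*} [Field K] (m : ℕ)
    (g : ℕ → MvPolynomial (Fin 2) K) (p c : K) :
    Ideal.span ((keyedF m g p c) '' Set.Iic m)
        = Ideal.span ((fun k => if k < m then X ((k : ℕ) : Fin (m + 1)) - yPoly m (ghat g p k)
            else yPoly m (ghat g p m - Polynomial.C c)) '' Set.Iic m)
      ∧ IsGroebner (lexLT sigDes)
          ((fun k => if k < m then X ((k : ℕ) : Fin (m + 1)) - yPoly m (ghat g p k)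
            else yPoly m (ghat g p m - Polynomial.C c)) '' Set.Iic m)
          (Ideal.span ((keyedF m g p c) '' Set.Iic m)) := by
  rw [KeyedSystem.span_keyedF_eq_span_triangularBasis]
  exact ⟨rfl, KeyedSystem.isGroebner_triangularBasis⟩

/-- (`n = m + 1 ≥ 2`.) The polynomials
`x_1 - ĝ_1, …, x_{n-1} - ĝ_{n-1}, ĝ_n` generate the same ideal as the univariate keyed iterated
polynomial system and form a Gröbner basis of it with respect to the lexicographic order
`x_1 > ⋯ > x_{n-1} > y`. -/
theorem stmt_6 {K : Type*} [Field K] (m : ℕ) (hm : 1 ≤ m)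
    (g : ℕ → MvPolynomial (Fin 2) K) (p c : K)
    (hgnc : ∀ k ≤ m, 0 < (g k).totalDegree)
    (hzero : ∃ z : Fin (m + 1) → K, ∀ k ≤ m, eval z (keyedF m g p c k) = 0) :
    Ideal.span ((keyedF m g p c) '' Set.Iic m)
        = Ideal.span ((fun k => if k < m then X ((k : ℕ) : Fin (m + 1)) - yPoly m (ghat g p k)
            else yPoly m (ghat g p m - Polynomial.C c)) '' Set.Iic m)
      ∧ IsGroebner (lexLT sigDes)
          ((fun k => if k < m then X ((k : ℕ) : Fin (m + 1)) - yPoly m (ghat g p k)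
            else yPoly m (ghat g p m - Polynomial.C c)) '' Set.Iic m)
          (Ideal.span ((keyedF m g p c) '' Set.Iic m)) :=
  stmt_6_general m g p c
end

section
/- Let K be a field, let n ≥ 2, and let f_1,…,f_n ∈ K[x_1,…,x_{n−1},y] be a univariate keyed iterated polynomial system such that d_i := deg f_i ≥ 2 for all 1 ≤ i ≤ n and the monomial x_{i−1}^{d_i} occurs in f_i for all 2 ≤ i ≤ n. With ĝ_1 = g_1(p,y), ĝ_i = g_i(ĝ_{i−1}(y), y) for 2 ≤ i ≤ n−1 and ĝ_n = g_n(ĝ_{n−1}(y), y) − c in K[y], one has deg ĝ_i = ∏_{k=1}^{i} d_k for all 1 ≤ i ≤ n. -/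
open MvPolynomial
open Fin.NatCast

/-! Under `x ↦ q`, `y ↦ X` a monomial `x^i y^j` of `g_k` becomes a polynomial of degree at most
`i · deg q + j`. Since `deg f_k ≥ 2`, the affine term `x_k` or `c` of `f_k` changes neither its
degree nor its coefficient of `x_{k-1}^{d_k}`, so `g_k` has total degree `d_k` and contains
`x^{d_k}`. As `deg ĝ_{k-1} ≥ 2`, that monomial alone reaches degree `d_k · deg ĝ_{k-1}`. -/

namespace MvPolynomial

variable {R σ τ : Type*}

section CommSemiring

variable [CommSemiring R]

theorem totalDegree_rename_of_injective {f : σ → τ} (hf : Function.Injective f)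
    (P : MvPolynomial σ R) : (rename f P).totalDegree = P.totalDegree := by
  rw [← weightedTotalDegree_one, weightedTotalDegree_rename_of_injective hf,
    ← weightedTotalDegree_one]
  rfl

theorem toMvPolynomial_eq_sum_monomial (i : σ) (q : Polynomial R) :
    q.toMvPolynomial i = ∑ n ∈ q.support, monomial (Finsupp.single i n) (q.coeff n) := by
  conv_lhs => rw [q.as_sum_support_C_mul_X_pow]
  simp [X_pow_eq_monomial, C_mul_monomial]

theorem coeff_single_toMvPolynomial (i : σ) (q : Polynomial R) (n : ℕ) :
    (q.toMvPolynomial i).coeff (Finsupp.single i n) = q.coeff n := by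
  classical
  rw [toMvPolynomial_eq_sum_monomial, coeff_sum]
  simp_rw [coeff_monomial, (Finsupp.single_injective i).eq_iff]
  simp +contextual [eq_comm]

theorem totalDegree_toMvPolynomial (i : σ) (q : Polynomial R) :
    (q.toMvPolynomial i).totalDegree = q.natDegree := by
  refine le_antisymm ?_ ?_
  · rw [toMvPolynomial_eq_sum_monomial]
    refine (totalDegree_finsetSum _ _).trans (Finset.sup_le fun n hn => ?_)
    refine (totalDegree_monomial_le _ _).trans ?_
    simpa using Polynomial.le_natDegree_of_mem_supp n hn
  · rcases eq_or_ne q 0 with rfl | hq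
    · simp
    have hmem : Finsupp.single i q.natDegree ∈ (q.toMvPolynomial i).support := by
      rw [mem_support_iff, coeff_single_toMvPolynomial]
      exact Polynomial.leadingCoeff_ne_zero.mpr hq
    simpa using le_totalDegree hmem

end CommSemiring

section CommRing

variable [CommRing R] {P L : MvPolynomial σ R}

theorem totalDegree_sub_eq_left_of_totalDegree_le_one (hL : L.totalDegree ≤ 1)
    (h : 2 ≤ (P - L).totalDegree) : (P - L).totalDegree = P.totalDegree := by
  have hPL := totalDegree_sub P L
  rw [sub_eq_add_neg, totalDegree_add_eq_left_of_totalDegree_lt]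
  rw [totalDegree_neg]
  omega

theorem coeff_sub_of_totalDegree_le_one (hL : L.totalDegree ≤ 1) {s : σ →₀ ℕ}
    (hs : 2 ≤ ∑ i ∈ s.support, s i) : (P - L).coeff s = P.coeff s := by
  rw [coeff_sub, coeff_eq_zero_of_totalDegree_lt (f := L) (by omega), sub_zero]

end CommRing

end MvPolynomial

theorem Nat.mul_add_lt_mul_of_add_le {i j d D : ℕ} (hij : i + j ≤ d) (hne : (i, j) ≠ (d, 0))
    (hD : 2 ≤ D) : i * D + j < d * D := by
  obtain hi | rfl := Nat.lt_or_eq_of_le (show i ≤ d by omega)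
  · obtain ⟨e, rfl⟩ := Nat.exists_eq_add_of_lt hi
    nlinarith
  · simp_all

open Polynomial in
theorem MvPolynomial.natDegree_aeval_eq_mul {R : Type*} [CommRing R] [IsDomain R]
    {G : MvPolynomial (Fin 2) R} {d : ℕ} (hG : G.totalDegree ≤ d)
    (hc : G.coeff (Finsupp.single 0 d) ≠ 0) {q : R[X]} (hq : 2 ≤ q.natDegree) :
    (aeval ![q, Polynomial.X] G).natDegree = d * q.natDegree := by
  classical
  set term : (Fin 2 →₀ ℕ) → R[X] := fun a =>
    Polynomial.C (G.coeff a) * q ^ a 0 * Polynomial.X ^ a 1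
  have hsum : aeval ![q, Polynomial.X] G = ∑ a ∈ G.support, term a := by
    simp [term, aeval_eq_eval₂Hom, eval₂_eq', Fin.prod_univ_two, mul_assoc]
  have hlead_deg : (term (Finsupp.single 0 d)).degree = (d * q.natDegree : ℕ) := by
    rw [show term (Finsupp.single 0 d) = Polynomial.C (G.coeff (Finsupp.single 0 d)) * q ^ d by
      simp [term], degree_C_mul hc, degree_pow, degree_eq_natDegree (by rintro rfl; simp at hq)]
    norm_cast
  have hrest : (∑ a ∈ G.support.erase (Finsupp.single 0 d), term a).degree
      < (d * q.natDegree : ℕ) := by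
    refine (degree_sum_le _ _).trans_lt ((Finset.sup_lt_iff (WithBot.bot_lt_coe _)).2 ?_)
    intro a ha
    obtain ⟨hne, ha⟩ := Finset.mem_erase.1 ha
    have hdeg : a 0 + a 1 ≤ d := by
      have := le_totalDegree ha
      rw [Finsupp.sum_fintype _ _ (fun _ => rfl), Fin.sum_univ_two] at this
      omega
    have hne' : (a 0, a 1) ≠ (d, 0) := fun h => hne (by
      ext j; fin_cases j <;> simp_all [Prod.ext_iff])
    refine degree_le_natDegree.trans_lt (WithBot.coe_lt_coe.2 ?_)
    calc (term a).natDegree ≤ a 0 * q.natDegree + a 1 := natDegree_mul_le.trans <|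
          add_le_add ((natDegree_C_mul_le _ _).trans natDegree_pow_le) (natDegree_X_pow_le _)
      _ < d * q.natDegree := Nat.mul_add_lt_mul_of_add_le hdeg hne' hq
  rw [hsum, ← Finset.add_sum_erase _ _ (MvPolynomial.mem_support_iff.2 hc),
    natDegree_eq_of_degree_eq_some]
  rw [degree_add_eq_left_of_degree_lt (hlead_deg ▸ hrest), hlead_deg]

section KeyedSystem

variable {K : Type*} [Field K] {m : ℕ} {g : ℕ → MvPolynomial (Fin 2) K} {p c : K} {k : ℕ}

noncomputable def keyedTail (m : ℕ) (c : K) (k : ℕ) : MvPolynomial (Fin (m + 1)) K :=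
  if k < m then X ((k : ℕ) : Fin (m + 1)) else C c

theorem totalDegree_keyedTail_le (m : ℕ) (c : K) (k : ℕ) :
    (keyedTail m c k).totalDegree ≤ 1 := by
  unfold keyedTail
  split_ifs
  · exact (totalDegree_X _).le
  · simp

theorem keyedF_zero :
    keyedF m g p c 0 = (ghat g p 0).toMvPolynomial ((m : ℕ) : Fin (m + 1)) - keyedTail m c 0 := by
  have hvec : (fun i => (![Polynomial.C p, Polynomial.X] i).toMvPolynomial
      ((m : ℕ) : Fin (m + 1))) = ![C p, X ((m : ℕ) : Fin (m + 1))] := by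
    funext i
    fin_cases i <;> simp
  rw [keyedF, ghat, comp_aeval_apply, hvec]
  rfl

theorem keyedF_of_ne_zero (hk : k ≠ 0) :
    keyedF m g p c k
      = rename ![((k - 1 : ℕ) : Fin (m + 1)), ((m : ℕ) : Fin (m + 1))] (g k)
        - keyedTail m c k := by
  rw [keyedF, if_neg hk, rename_eq_aeval]
  congr 3
  funext i
  fin_cases i <;> rfl

theorem totalDegree_keyedF_zero (h : 2 ≤ (keyedF m g p c 0).totalDegree) :
    (keyedF m g p c 0).totalDegree = (ghat g p 0).natDegree := by
  rw [keyedF_zero] at h ⊢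
  rw [totalDegree_sub_eq_left_of_totalDegree_le_one (totalDegree_keyedTail_le m c 0) h,
    totalDegree_toMvPolynomial]

theorem keyedF_vars_injective (hk : k ≠ 0) (hkm : k ≤ m) :
    Function.Injective ![((k - 1 : ℕ) : Fin (m + 1)), ((m : ℕ) : Fin (m + 1))] := by
  have hne : ((k - 1 : ℕ) : Fin (m + 1)) ≠ ((m : ℕ) : Fin (m + 1)) := by
    rw [Ne, Fin.ext_iff, Fin.val_cast_of_lt (by omega), Fin.val_cast_of_lt (by omega)]
    omega
  intro i j hij
  fin_cases i <;> fin_cases j <;> simp_all [eq_comm]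

theorem totalDegree_keyedF_of_ne_zero (hk : k ≠ 0) (hkm : k ≤ m)
    (h : 2 ≤ (keyedF m g p c k).totalDegree) :
    (keyedF m g p c k).totalDegree = (g k).totalDegree := by
  rw [keyedF_of_ne_zero hk] at h ⊢
  rw [totalDegree_sub_eq_left_of_totalDegree_le_one (totalDegree_keyedTail_le m c k) h,
    totalDegree_rename_of_injective (keyedF_vars_injective hk hkm)]

theorem coeff_keyedF_of_ne_zero (hk : k ≠ 0) (hkm : k ≤ m) {d : ℕ} (hd : 2 ≤ d) :
    (keyedF m g p c k).coeff (Finsupp.single ((k - 1 : ℕ) : Fin (m + 1)) d)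
      = (g k).coeff (Finsupp.single 0 d) := by
  rw [keyedF_of_ne_zero hk,
    coeff_sub_of_totalDegree_le_one (totalDegree_keyedTail_le m c k) (by
      rw [Finsupp.support_single _ (by omega), Finset.sum_singleton,
        Finsupp.single_eq_same]
      exact hd),
    ← coeff_rename_mapDomain _ (keyedF_vars_injective hk hkm), Finsupp.mapDomain_single]
  rfl

theorem natDegree_ghat_succ (hkm : k + 1 ≤ m) (hdeg : 2 ≤ (keyedF m g p c (k + 1)).totalDegree)
    (hmon : (keyedF m g p c (k + 1)).coeff
      (Finsupp.single ((k : ℕ) : Fin (m + 1)) (keyedF m g p c (k + 1)).totalDegree) ≠ 0)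
    (hq : 2 ≤ (ghat g p k).natDegree) :
    (ghat g p (k + 1)).natDegree = (keyedF m g p c (k + 1)).totalDegree * (ghat g p k).natDegree :=
  natDegree_aeval_eq_mul (totalDegree_keyedF_of_ne_zero k.succ_ne_zero hkm hdeg).ge
    (coeff_keyedF_of_ne_zero (c := c) k.succ_ne_zero hkm hdeg ▸ hmon) hq

theorem natDegree_ghat_eq_prod (hdeg : ∀ k ≤ m, 2 ≤ (keyedF m g p c k).totalDegree)
    (hmon : ∀ k, 1 ≤ k → k ≤ m →
      (keyedF m g p c k).coeff (Finsupp.single (((k - 1 : ℕ)) : Fin (m + 1))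
        ((keyedF m g p c k).totalDegree)) ≠ 0) (hk : k ≤ m) :
    (ghat g p k).natDegree = ∏ j ∈ Finset.range (k + 1), (keyedF m g p c j).totalDegree ∧
      2 ≤ (ghat g p k).natDegree := by
  induction k with
  | zero =>
    rw [Finset.prod_range_one, totalDegree_keyedF_zero (hdeg 0 hk)]
    exact ⟨rfl, totalDegree_keyedF_zero (hdeg 0 hk) ▸ hdeg 0 hk⟩
  | succ k ih =>
    obtain ⟨ih, hq⟩ := ih (by omega)
    rw [natDegree_ghat_succ hk (hdeg _ hk) (hmon _ k.succ_pos hk) hq, Finset.prod_range_succ, ih,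
      mul_comm]
    exact ⟨rfl, by nlinarith [hdeg _ hk]⟩

end KeyedSystem

theorem stmt_8_general {K : Type*} [Field K] (m : ℕ)
    (g : ℕ → MvPolynomial (Fin 2) K) (p c : K)
    (hdeg : ∀ k ≤ m, 2 ≤ (keyedF m g p c k).totalDegree)
    (hmon : ∀ k, 1 ≤ k → k ≤ m →
      (keyedF m g p c k).coeff (Finsupp.single (((k - 1 : ℕ)) : Fin (m + 1))
        ((keyedF m g p c k).totalDegree)) ≠ 0) :
    ∀ k ≤ m, (if k < m then ghat g p k else ghat g p m - Polynomial.C c).natDegree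
      = ∏ j ∈ Finset.range (k + 1), (keyedF m g p c j).totalDegree := by
  intro k hk
  split_ifs with hkm
  · exact (natDegree_ghat_eq_prod hdeg hmon hk).1
  · obtain rfl : k = m := by omega
    rw [Polynomial.natDegree_sub_C]
    exact (natDegree_ghat_eq_prod hdeg hmon hk).1

/-- (`n = m + 1 ≥ 2`.) Under the degree and monomial hypotheses, the
univariate polynomials `ĝ_i` of the lexicographic Gröbner basis satisfy
`deg ĝ_i = ∏_{k=1}^i d_k`. -/
theorem stmt_8 {K : Type*} [Field K] (m : ℕ) (hm : 1 ≤ m)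
    (g : ℕ → MvPolynomial (Fin 2) K) (p c : K)
    (hgnc : ∀ k ≤ m, 0 < (g k).totalDegree)
    (hzero : ∃ z : Fin (m + 1) → K, ∀ k ≤ m, eval z (keyedF m g p c k) = 0)
    (hdeg : ∀ k ≤ m, 2 ≤ (keyedF m g p c k).totalDegree)
    (hmon : ∀ k, 1 ≤ k → k ≤ m →
      (keyedF m g p c k).coeff (Finsupp.single (((k - 1 : ℕ)) : Fin (m + 1))
        ((keyedF m g p c k).totalDegree)) ≠ 0) :
    ∀ k ≤ m, (if k < m then ghat g p k else ghat g p m - Polynomial.C c).natDegree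
      = ∏ j ∈ Finset.range (k + 1), (keyedF m g p c j).totalDegree :=
  stmt_8_general m g p c hdeg hmon
end
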